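/- arXiv:2002.11219 — 8 statements merged into one kernel-verified Lean document; each statement's English description precedes it below -/
import Mathlib

section
/- Let A ∈ ℝ^{n×d}. (i) A is spike-free if and only if for every u ∈ B₂ there exists z ∈ B₂ such that (Au)_+ = Az. (ii) If moreover A has full row rank n (so n ≤ d and AAᵀ is invertible), then, writing A† := Aᵀ(AAᵀ)⁻¹, A is spike-free if and only if sup_{u ∈ B₂} ‖A†(Au)_+‖₂ ≤ 1. -/
open Finset Matrix

/-- Euclidean (ℓ2) norm of a finite-dimensional real vector. -/
noncomputable def l2norm {k : ℕ} (x : Fin k → ℝ) : ℝ := Real.sqrt (∑ i, x i ^ 2)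

/-- Entrywise ReLU of a vector. -/
def reluV {k : ℕ} (x : Fin k → ℝ) : Fin k → ℝ := fun i => max (x i) 0

/-- `A` is spike-free if `{(Au)_+ : u ∈ B₂} = {Au : u ∈ B₂} ∩ ℝ₊ⁿ`. -/
def IsSpikeFree {n d : ℕ} (A : Matrix (Fin n) (Fin d) ℝ) : Prop :=
  {x : Fin n → ℝ | ∃ u, l2norm u ≤ 1 ∧ x = reluV (A.mulVec u)} =
    {x : Fin n → ℝ | ∃ u, l2norm u ≤ 1 ∧ x = A.mulVec u} ∩ {x | ∀ i, 0 ≤ x i}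

lemma proj_sq_le {d : ℕ} (P : Matrix (Fin d) (Fin d) ℝ) (hsym : Pᵀ = P)
    (hidem : P * P = P) (z : Fin d → ℝ) : l2norm (P.mulVec z) ≤ l2norm z := by
  have h1 : ∀ a b : Fin d → ℝ, (P.mulVec a) ⬝ᵥ b = a ⬝ᵥ (P.mulVec b) := by
    intro a b
    rw [Matrix.dotProduct_mulVec, ← Matrix.mulVec_transpose, hsym]
  have h2 : (P.mulVec z) ⬝ᵥ (P.mulVec z) = z ⬝ᵥ (P.mulVec z) := by
    rw [h1, Matrix.mulVec_mulVec, hidem]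
  have h3 : 0 ≤ (z - P.mulVec z) ⬝ᵥ (z - P.mulVec z) :=
    Finset.sum_nonneg fun i _ => mul_self_nonneg _
  have h4 : (z - P.mulVec z) ⬝ᵥ (z - P.mulVec z) = z ⬝ᵥ z - z ⬝ᵥ (P.mulVec z) := by
    rw [sub_dotProduct, dotProduct_sub, dotProduct_sub, h2,
      dotProduct_comm (P.mulVec z) z]
    ring
  have h5 : (P.mulVec z) ⬝ᵥ (P.mulVec z) ≤ z ⬝ᵥ z := by
    rw [h2]; linarith [h3, h4.symm]
  unfold l2norm
  apply Real.sqrt_le_sqrt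
  simpa [dotProduct, pow_two] using h5

/-- (i) `A` is spike-free iff for each `u ∈ B₂` there is `z ∈ B₂` with `(Au)_+ = Az`;
(ii) if moreover `A` has full row rank `n` (so `n ≤ d`), then, with `A† = Aᵀ(AAᵀ)⁻¹`,
`A` is spike-free iff `‖A†(Au)_+‖₂ ≤ 1` for every `u ∈ B₂`. -/
theorem stmt2 {n d : ℕ} (A : Matrix (Fin n) (Fin d) ℝ) :
    (IsSpikeFree A ↔
      ∀ u : Fin d → ℝ, l2norm u ≤ 1 → ∃ z : Fin d → ℝ, l2norm z ≤ 1 ∧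
        reluV (A.mulVec u) = A.mulVec z) ∧
    (n ≤ d → A.rank = n →
      (IsSpikeFree A ↔
        ∀ u : Fin d → ℝ, l2norm u ≤ 1 →
          l2norm ((Aᵀ * (A * Aᵀ)⁻¹).mulVec (reluV (A.mulVec u))) ≤ 1)) := by
  have hi : IsSpikeFree A ↔
      ∀ u : Fin d → ℝ, l2norm u ≤ 1 → ∃ z : Fin d → ℝ, l2norm z ≤ 1 ∧
        reluV (A.mulVec u) = A.mulVec z := by
    constructor
    · intro h u hu
      have hx : reluV (A.mulVec u) ∈
          {x : Fin n → ℝ | ∃ u, l2norm u ≤ 1 ∧ x = reluV (A.mulVec u)} := ⟨u, hu, rfl⟩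
      rw [h] at hx
      obtain ⟨⟨z, hz, hxz⟩, -⟩ := hx
      exact ⟨z, hz, hxz⟩
    · intro h
      ext x
      constructor
      · rintro ⟨u, hu, rfl⟩
        obtain ⟨z, hz, hzeq⟩ := h u hu
        exact ⟨⟨z, hz, hzeq⟩, fun i => le_max_right _ _⟩
      · rintro ⟨⟨u, hu, rfl⟩, hpos⟩
        refine ⟨u, hu, ?_⟩
        funext i
        exact (max_eq_left (hpos i)).symm
  refine ⟨hi, fun hnd hrank => ?_⟩
  -- invertibility of A * Aᵀ
  have hdet : IsUnit (A * Aᵀ).det := by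
    rw [← Matrix.isUnit_iff_isUnit_det, ← Matrix.mulVec_surjective_iff_isUnit]
    have hr : (A * Aᵀ).rank = n := by rw [Matrix.rank_self_mul_transpose, hrank]
    have htop : LinearMap.range (A * Aᵀ).mulVecLin = ⊤ := by
      apply Submodule.eq_top_of_finrank_eq
      rw [← Matrix.rank, hr]
      simp
    intro y
    have : y ∈ LinearMap.range (A * Aᵀ).mulVecLin := htop ▸ Submodule.mem_top
    obtain ⟨x, hx⟩ := this
    exact ⟨x, hx⟩
  have hright : A * (Aᵀ * (A * Aᵀ)⁻¹) = 1 := by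
    rw [← Matrix.mul_assoc, Matrix.mul_nonsing_inv _ hdet]
  have hAdag : ∀ y : Fin n → ℝ,
      A.mulVec ((Aᵀ * (A * Aᵀ)⁻¹).mulVec y) = y := by
    intro y
    rw [Matrix.mulVec_mulVec, hright, Matrix.one_mulVec]
  set P : Matrix (Fin d) (Fin d) ℝ := Aᵀ * (A * Aᵀ)⁻¹ * A with hP
  have hBsym : (A * Aᵀ)ᵀ = A * Aᵀ := by rw [Matrix.transpose_mul, Matrix.transpose_transpose]
  have hBinvsym : ((A * Aᵀ)⁻¹)ᵀ = (A * Aᵀ)⁻¹ := by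
    rw [Matrix.transpose_nonsing_inv, hBsym]
  have hPsym : Pᵀ = P := by
    rw [hP, Matrix.transpose_mul, Matrix.transpose_mul, hBinvsym, Matrix.transpose_transpose,
      Matrix.mul_assoc]
  have h1' : A * (Aᵀ * ((A * Aᵀ)⁻¹ * A)) = A := by
    rw [← Matrix.mul_assoc, ← Matrix.mul_assoc, Matrix.mul_assoc A Aᵀ, hright, Matrix.one_mul]
  have hPP : P * P = P := by
    rw [hP]
    simp only [Matrix.mul_assoc]
    rw [h1']
  constructor
  · intro h u hu
    obtain ⟨z, hz, hzeq⟩ := hi.mp h u hu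
    rw [hzeq, Matrix.mulVec_mulVec]
    calc l2norm ((Aᵀ * (A * Aᵀ)⁻¹ * A).mulVec z) ≤ l2norm z :=
          proj_sq_le _ hPsym hPP z
      _ ≤ 1 := hz
  · intro h
    apply hi.mpr
    intro u hu
    exact ⟨(Aᵀ * (A * Aᵀ)⁻¹).mulVec (reluV (A.mulVec u)), h u hu, (hAdag _).symm⟩
end

section
/- Let A ∈ ℝ^{n×d} with n ≤ d satisfy AAᵀ = I_n (a whitened data matrix). Then sup_{u ∈ B₂} ‖Aᵀ(Au)_+‖₂ ≤ 1 (note Aᵀ = Aᵀ(AAᵀ)⁻¹ is the pseudoinverse of A in this case), and as a direct consequence A is spike-free. -/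
open Finset Matrix

lemma transpose_mulVec_sq_sum {n d : ℕ} (A : Matrix (Fin n) (Fin d) ℝ)
    (hA : A * Aᵀ = 1) (w : Fin n → ℝ) :
    ∑ j, (Aᵀ.mulVec w j) ^ 2 = ∑ i, (w i) ^ 2 := by
  have h1 : ∀ j, Aᵀ.mulVec w j = ∑ i, A i j * w i := by
    intro j; simp [Matrix.mulVec, dotProduct, Matrix.transpose_apply]
  calc ∑ j, (Aᵀ.mulVec w j) ^ 2
      = ∑ j, ∑ i, ∑ i', (A i j * w i) * (A i' j * w i') := by
        simp_rw [h1, sq, Finset.sum_mul_sum]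
    _ = ∑ i, ∑ i', (∑ j, A i j * A i' j) * (w i * w i') := by
        rw [Finset.sum_comm]
        refine Finset.sum_congr rfl fun i _ => ?_
        rw [Finset.sum_comm]
        refine Finset.sum_congr rfl fun i' _ => ?_
        rw [Finset.sum_mul]
        exact Finset.sum_congr rfl fun j _ => by ring
    _ = ∑ i, ∑ i', ((1 : Matrix (Fin n) (Fin n) ℝ) i i') * (w i * w i') := by
        refine Finset.sum_congr rfl fun i _ => Finset.sum_congr rfl fun i' _ => ?_
        rw [← hA]
        simp [Matrix.mul_apply, Matrix.transpose_apply]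
    _ = ∑ i, (w i) ^ 2 := by
        refine Finset.sum_congr rfl fun i _ => ?_
        simp [Matrix.one_apply, Finset.sum_ite_eq, sq]

lemma mulVec_sq_sum_le {n d : ℕ} (A : Matrix (Fin n) (Fin d) ℝ)
    (hA : A * Aᵀ = 1) (u : Fin d → ℝ) :
    ∑ i, (A.mulVec u i) ^ 2 ≤ ∑ j, (u j) ^ 2 := by
  have ht0 : (0:ℝ) ≤ ∑ i, (A.mulVec u i) ^ 2 := Finset.sum_nonneg fun i _ => sq_nonneg _
  have hs0 : (0:ℝ) ≤ ∑ j, (u j) ^ 2 := Finset.sum_nonneg fun j _ => sq_nonneg _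
  have key : ∑ i, (A.mulVec u i) ^ 2 = ∑ j, (Aᵀ.mulVec (A.mulVec u) j) * u j := by
    calc ∑ i, (A.mulVec u i) ^ 2
        = ∑ i, ∑ j, (A.mulVec u i) * (A i j * u j) := by
          refine Finset.sum_congr rfl fun i _ => ?_
          rw [sq, ← Finset.mul_sum]
          congr 1
      _ = ∑ j, ∑ i, (A.mulVec u i) * (A i j * u j) := Finset.sum_comm
      _ = ∑ j, (Aᵀ.mulVec (A.mulVec u) j) * u j := by
          refine Finset.sum_congr rfl fun j _ => ?_
          have h2 : Aᵀ.mulVec (A.mulVec u) j = ∑ i, A i j * A.mulVec u i := rfl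
          rw [h2, Finset.sum_mul]
          exact Finset.sum_congr rfl fun i _ => by ring
  have cs := Finset.sum_mul_sq_le_sq_mul_sq Finset.univ
    (fun j => Aᵀ.mulVec (A.mulVec u) j) u
  rw [transpose_mulVec_sq_sum A hA] at cs
  rw [← key] at cs
  nlinarith [cs, ht0, hs0]

lemma relu_sq_sum_le {k : ℕ} (x : Fin k → ℝ) :
    ∑ i, (reluV x i) ^ 2 ≤ ∑ i, (x i) ^ 2 := by
  refine Finset.sum_le_sum fun i _ => ?_
  simp only [reluV]
  rcases le_or_gt (x i) 0 with h | h
  · rw [max_eq_right h]; simpa using sq_nonneg (x i)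
  · rw [max_eq_left h.le]

/-- A whitened data matrix (`AAᵀ = I`, `n ≤ d`) satisfies
`‖Aᵀ(Au)_+‖₂ ≤ 1` for all `u ∈ B₂`, and consequently is spike-free. -/
theorem stmt3 {n d : ℕ} (hnd : n ≤ d) (A : Matrix (Fin n) (Fin d) ℝ)
    (hA : A * Aᵀ = 1) :
    (∀ u : Fin d → ℝ, l2norm u ≤ 1 → l2norm (Aᵀ.mulVec (reluV (A.mulVec u))) ≤ 1) ∧
    IsSpikeFree A := by
  have hnorm : ∀ u : Fin d → ℝ, l2norm u ≤ 1 →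
      l2norm (Aᵀ.mulVec (reluV (A.mulVec u))) ≤ 1 := by
    intro u hu
    have h1 : ∑ j, (Aᵀ.mulVec (reluV (A.mulVec u)) j) ^ 2 ≤ ∑ j, (u j) ^ 2 := by
      rw [transpose_mulVec_sq_sum A hA]
      exact (relu_sq_sum_le _).trans (mulVec_sq_sum_le A hA u)
    have : l2norm (Aᵀ.mulVec (reluV (A.mulVec u))) ≤ l2norm u :=
      Real.sqrt_le_sqrt h1
    exact this.trans hu
  refine ⟨hnorm, ?_⟩
  have hAAT : ∀ w : Fin n → ℝ, A.mulVec (Aᵀ.mulVec w) = w := by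
    intro w
    rw [Matrix.mulVec_mulVec, hA, Matrix.one_mulVec]
  ext x
  constructor
  · rintro ⟨u, hu, rfl⟩
    refine ⟨⟨Aᵀ.mulVec (reluV (A.mulVec u)), hnorm u hu, (hAAT _).symm⟩, ?_⟩
    intro i; exact le_max_right _ _
  · rintro ⟨⟨u, hu, rfl⟩, hpos⟩
    refine ⟨u, hu, ?_⟩
    funext i
    exact (max_eq_left (hpos i)).symm
end

section
/- Let c ∈ ℝⁿ have nonnegative entries, let a ∈ ℝ^d, and set A = c aᵀ ∈ ℝ^{n×d} (a rank-one data matrix with nonnegative left factor). Then A is spike-free. -/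
open Finset Matrix

/-
For `A = c aᵀ` every vector `Au = (aᵀu) c` is a multiple of the nonnegative vector `c`. If
`aᵀu ≥ 0` then `Au` is already nonnegative and `(Au)_+ = Au`; otherwise `(Au)_+ = 0 = A 0`.
-/

@[simp]
lemma l2norm_zero {k : ℕ} : l2norm (0 : Fin k → ℝ) = 0 := by
  simp [l2norm]

lemma reluV_nonneg {k : ℕ} (x : Fin k → ℝ) (i : Fin k) : 0 ≤ reluV x i :=
  le_max_right _ _

lemma reluV_eq_self {k : ℕ} {x : Fin k → ℝ} (hx : ∀ i, 0 ≤ x i) : reluV x = x :=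
  funext fun i => max_eq_left (hx i)

lemma reluV_eq_zero {k : ℕ} {x : Fin k → ℝ} (hx : ∀ i, x i ≤ 0) : reluV x = 0 :=
  funext fun i => max_eq_right (hx i)

lemma isSpikeFree_iff {n d : ℕ} (A : Matrix (Fin n) (Fin d) ℝ) :
    IsSpikeFree A ↔ ∀ u, l2norm u ≤ 1 → ∃ v, l2norm v ≤ 1 ∧ reluV (A *ᵥ u) = A *ᵥ v := by
  refine ⟨fun h u hu => ?_, fun h => ?_⟩
  · have hmem : reluV (A *ᵥ u) ∈ {x | ∃ u, l2norm u ≤ 1 ∧ x = reluV (A *ᵥ u)} := ⟨u, hu, rfl⟩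
    rw [h] at hmem
    obtain ⟨⟨v, hv, hAv⟩, -⟩ := hmem
    exact ⟨v, hv, hAv⟩
  · ext x
    constructor
    · rintro ⟨u, hu, rfl⟩
      obtain ⟨v, hv, hAv⟩ := h u hu
      exact ⟨⟨v, hv, hAv⟩, reluV_nonneg _⟩
    · rintro ⟨⟨u, hu, rfl⟩, hx⟩
      exact ⟨u, hu, (reluV_eq_self hx).symm⟩

lemma mulVec_of_mul {m n : ℕ} (c : Fin m → ℝ) (a u : Fin n → ℝ) :
    (Matrix.of fun i j => c i * a j) *ᵥ u = (a ⬝ᵥ u) • c := by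
  ext i
  simp [Matrix.mulVec, dotProduct, Finset.mul_sum, mul_comm, mul_left_comm]

/-- A rank-one matrix `A = c aᵀ` with nonnegative left factor `c` is spike-free. -/
theorem stmt4 {n d : ℕ} (c : Fin n → ℝ) (hc : ∀ i, 0 ≤ c i) (a : Fin d → ℝ) :
    IsSpikeFree (Matrix.of fun i j => c i * a j) := by
  refine (isSpikeFree_iff _).2 fun u hu => ?_
  rw [mulVec_of_mul]
  rcases le_total 0 (a ⬝ᵥ u) with hau | hau
  · refine ⟨u, hu, ?_⟩
    rw [mulVec_of_mul]
    exact reluV_eq_self fun i => mul_nonneg hau (hc i)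
  · refine ⟨0, by simp, ?_⟩
    rw [mulVec_zero]
    exact reluV_eq_zero fun i => mul_nonpos_of_nonpos_of_nonneg hau (hc i)
end

section
/- Let a ∈ ℝⁿ be one-dimensional data (d = 1) and let v ∈ ℝⁿ. If the supremum S := sup { Σ_{i=1}^n v_i (a_i u + b)_+ : u ∈ [−1, 1], b ∈ ℝ } is finite, then it is attained at a point of the form u ∈ {−1, +1} and b = −u a_i for some index i ∈ {1,…,n}; that is, the extreme point of the rectified set along the direction v is achieved at a neuron whose activation kink lies exactly at one of the data points. -/
open Finset

private lemma sum_relu_eq {n : ℕ} (v w : Fin n → ℝ) :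
    ∑ j, v j * max (w j) 0 = ∑ j ∈ univ.filter (fun j => 0 < w j), v j * w j := by
  rw [sum_filter]
  refine Finset.sum_congr rfl fun j _ => ?_
  by_cases h : 0 < w j
  · rw [if_pos h, max_eq_left h.le]
  · rw [if_neg h, max_eq_right (not_lt.1 h), mul_zero]

private lemma key {n : ℕ} (hn : 0 < n) (c v : Fin n → ℝ) (hv : ∑ i, v i ≤ 0) (b : ℝ) :
    ∃ i, ∑ j, v j * max (c j + b) 0 ≤ ∑ j, v j * max (c j - c i) 0 := by
  have hne : Nonempty (Fin n) := ⟨⟨0, hn⟩⟩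
  set P := univ.filter (fun j => 0 < c j + b) with hP
  by_cases hPe : P.Nonempty
  · -- P nonempty
    have hLHS : ∑ j, v j * max (c j + b) 0 = ∑ i ∈ P, v i * (c i + b) :=
      sum_relu_eq v (fun j => c j + b)
    by_cases hσ : ∑ i ∈ P, v i ≤ 0
    · obtain ⟨j, hjP, hjmin⟩ := P.exists_min_image c hPe
      refine ⟨j, ?_⟩
      have hjb : 0 < c j + b := (mem_filter.1 hjP).2
      have hRHS : ∑ i, v i * max (c i - c j) 0
          = ∑ i ∈ P, v i * (c i - c j) := by
        rw [sum_relu_eq v (fun i => c i - c j)]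
        refine Finset.sum_subset ?_ ?_
        · intro i hi
          have : 0 < c i - c j := (mem_filter.1 hi).2
          exact mem_filter.2 ⟨mem_univ i, by linarith⟩
        · intro i hiP hiQ
          have h1 : c j ≤ c i := hjmin i hiP
          have h2 : ¬ 0 < c i - c j := fun h =>
            hiQ (mem_filter.2 ⟨mem_univ i, h⟩)
          have : c i = c j := le_antisymm (by linarith) h1
          rw [this]; ring
      rw [hLHS, hRHS]
      have hdiff : ∑ i ∈ P, v i * (c i + b) - ∑ i ∈ P, v i * (c i - c j)
          = (∑ i ∈ P, v i) * (b + c j) := by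
        rw [← Finset.sum_sub_distrib, Finset.sum_mul]
        exact Finset.sum_congr rfl fun i _ => by ring
      nlinarith [mul_nonpos_of_nonpos_of_nonneg hσ (le_of_lt (by linarith : (0:ℝ) < b + c j))]
    · push_neg at hσ
      set N := univ.filter (fun i => ¬ 0 < c i + b) with hN
      have hNne : N.Nonempty := by
        by_contra h
        rw [not_nonempty_iff_eq_empty, filter_eq_empty_iff] at h
        have : P = univ := by
          ext i
          simp only [hP, mem_filter, mem_univ, true_and, iff_true]
          exact not_not.1 (h (mem_univ i))
        rw [this] at hσ
        exact absurd hv (not_le.2 hσ)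
      obtain ⟨k, hkN, hkmax⟩ := N.exists_max_image c hNne
      refine ⟨k, ?_⟩
      have hkb : c k + b ≤ 0 := not_lt.1 (mem_filter.1 hkN).2
      have hRHS : ∑ i, v i * max (c i - c k) 0 = ∑ i ∈ P, v i * (c i - c k) := by
        rw [sum_relu_eq v (fun i => c i - c k)]
        apply Finset.sum_congr _ (fun _ _ => rfl)
        ext i
        simp only [mem_filter, mem_univ, true_and, hP]
        constructor
        · intro h
          by_contra hiP
          have : c i ≤ c k := hkmax i (mem_filter.2 ⟨mem_univ i, hiP⟩)
          linarith
        · intro h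
          linarith
      rw [hLHS, hRHS]
      have hdiff : ∑ i ∈ P, v i * (c i - c k) - ∑ i ∈ P, v i * (c i + b)
          = (∑ i ∈ P, v i) * (-(c k + b)) := by
        rw [← Finset.sum_sub_distrib, Finset.sum_mul]
        exact Finset.sum_congr rfl fun i _ => by ring
      nlinarith [mul_nonneg hσ.le (by linarith : (0:ℝ) ≤ -(c k + b))]
  · -- P empty
    obtain ⟨i, -, hi⟩ := Finset.exists_max_image (univ : Finset (Fin n)) c univ_nonempty
    refine ⟨i, le_of_eq ?_⟩
    have hL : ∑ j, v j * max (c j + b) 0 = 0 := by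
      refine Finset.sum_eq_zero fun j _ => ?_
      have : ¬ 0 < c j + b := fun h => hPe ⟨j, mem_filter.2 ⟨mem_univ j, h⟩⟩
      rw [max_eq_right (not_lt.1 this), mul_zero]
    have hR : ∑ j, v j * max (c j - c i) 0 = 0 := by
      refine Finset.sum_eq_zero fun j _ => ?_
      have : c j - c i ≤ 0 := by have := hi j (mem_univ j); linarith
      rw [max_eq_right this, mul_zero]
    rw [hL, hR]

/-- For one-dimensional data, if the supremum of `∑ᵢ vᵢ (aᵢ u + b)_+` over `|u| ≤ 1`, `b ∈ ℝ`
is finite, it is attained at `u = ±1` together with a bias `b = -u aᵢ` placing the ReLU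
kink exactly at one of the data points. -/
theorem stmt5 {n : ℕ} (hn : 0 < n) (a v : Fin n → ℝ)
    (hbdd : BddAbove
      {r : ℝ | ∃ u b : ℝ, |u| ≤ 1 ∧ r = ∑ i, v i * max (a i * u + b) 0}) :
    ∃ (s : ℝ) (i : Fin n), (s = 1 ∨ s = -1) ∧
      (∑ j, v j * max (a j * s + -(s * a i)) 0) =
        sSup {r : ℝ | ∃ u b : ℝ, |u| ≤ 1 ∧ r = ∑ i, v i * max (a i * u + b) 0} := by
  have hne : Nonempty (Fin n) := ⟨⟨0, hn⟩⟩
  set A := {r : ℝ | ∃ u b : ℝ, |u| ≤ 1 ∧ r = ∑ i, v i * max (a i * u + b) 0} with hA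
  -- Step 1: ∑ v ≤ 0
  have hvsum : ∑ i, v i ≤ 0 := by
    by_contra h
    push_neg at h
    obtain ⟨U, hU⟩ := hbdd
    set b0 := (max U 0 + 1) / (∑ i, v i) with hb0
    have hb0pos : 0 < b0 := div_pos (by positivity) h
    have hmem : (∑ i, v i * max (a i * 0 + b0) 0) ∈ A := ⟨0, b0, by norm_num, rfl⟩
    have hle := hU hmem
    have hval : ∑ i, v i * max (a i * 0 + b0) 0 = max U 0 + 1 := by
      simp only [mul_zero, zero_add, max_eq_left hb0pos.le]
      rw [← Finset.sum_mul, hb0, mul_div_cancel₀ _ (ne_of_gt h)]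
    rw [hval] at hle
    have : U < max U 0 + 1 := lt_of_le_of_lt (le_max_left _ _) (by linarith)
    linarith
  -- Step 2: the maximizer over the finite candidate set
  have h1mem : ((1:ℝ), (⟨0, hn⟩ : Fin n)) ∈ ({(1:ℝ), -1} : Finset ℝ) ×ˢ (univ : Finset (Fin n)) := by
    simp
  obtain ⟨p, hpmem, hpmax⟩ := Finset.exists_max_image ((({(1:ℝ), -1} : Finset ℝ)) ×ˢ univ)
    (fun q => ∑ j, v j * max (a j * q.1 + -(q.1 * a q.2)) 0) ⟨_, h1mem⟩
  set M := ∑ j, v j * max (a j * p.1 + -(p.1 * a p.2)) 0 with hM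
  have hps : p.1 = 1 ∨ p.1 = -1 := by
    have := (Finset.mem_product.1 hpmem).1
    simpa using this
  -- M ≥ 0
  obtain ⟨imax, -, himax⟩ := Finset.exists_max_image (univ : Finset (Fin n)) a univ_nonempty
  have hM0 : 0 ≤ M := by
    have hmem : ((1:ℝ), imax) ∈ ({(1:ℝ), -1} : Finset ℝ) ×ˢ (univ : Finset (Fin n)) := by simp
    have hle := hpmax (1, imax) hmem
    have hz : (∑ j, v j * max (a j * 1 + -(1 * a imax)) 0) = 0 :=
      Finset.sum_eq_zero fun j _ => by
        have := himax j (mem_univ j)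
        rw [max_eq_right (by linarith), mul_zero]
    simp only [hz] at hle
    exact hle
  -- Step 3: M is an upper bound for A
  have hub : ∀ r ∈ A, r ≤ M := by
    rintro r ⟨u, b, hu, rfl⟩
    by_cases hu0 : u = 0
    · subst hu0
      have heq : ∑ i, v i * max (a i * 0 + b) 0 = (∑ i, v i) * max b 0 := by
        simp only [mul_zero, zero_add]
        rw [Finset.sum_mul]
      rw [heq]
      have := mul_nonpos_of_nonpos_of_nonneg hvsum (le_max_right b 0)
      linarith
    · set s : ℝ := if 0 < u then 1 else -1 with hs
      have hsval : s = 1 ∨ s = -1 := by by_cases h : 0 < u <;> simp [hs, h]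
      have hupos : 0 < |u| := abs_pos.2 hu0
      have habs : |u| * s = u := by
        by_cases h : 0 < u
        · simp [hs, h, abs_of_pos h]
        · have hneg : u < 0 := lt_of_le_of_ne (not_lt.1 h) hu0
          simp [hs, h, abs_of_neg hneg]
      have hre : ∑ i, v i * max (a i * u + b) 0
          = |u| * ∑ j, v j * max (a j * s + b / |u|) 0 := by
        rw [Finset.mul_sum]
        refine Finset.sum_congr rfl fun j _ => ?_
        rw [← mul_assoc, mul_comm (|u|) (v j), mul_assoc]
        congr 1
        rw [mul_max_of_nonneg _ _ (abs_nonneg u), mul_zero]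
        congr 1
        refine Eq.symm ?_
        calc |u| * (a j * s + b / |u|) = (|u| * s) * a j + |u| * (b / |u|) := by ring
          _ = u * a j + b := by rw [habs, mul_div_cancel₀ b (ne_of_gt hupos)]
          _ = a j * u + b := by ring
      obtain ⟨i, hi⟩ := key hn (fun j => a j * s) v hvsum (b / |u|)
      have hmatch : ∑ j, v j * max (a j * s - a i * s) 0
          = ∑ j, v j * max (a j * s + -(s * a i)) 0 := by
        refine Finset.sum_congr rfl fun j _ => ?_
        rw [sub_eq_add_neg, mul_comm (a i) s]
      have hsmem : (s, i) ∈ ({(1:ℝ), -1} : Finset ℝ) ×ˢ (univ : Finset (Fin n)) := by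
        rcases hsval with h | h <;> simp [h]
      have hMle : (∑ j, v j * max (a j * s + -(s * a i)) 0) ≤ M := hpmax (s, i) hsmem
      have hgM : (∑ j, v j * max (a j * s + b / |u|) 0) ≤ M := by
        calc (∑ j, v j * max (a j * s + b / |u|) 0)
            ≤ ∑ j, v j * max (a j * s - a i * s) 0 := hi
          _ = ∑ j, v j * max (a j * s + -(s * a i)) 0 := hmatch
          _ ≤ M := hMle
      rw [hre]
      by_cases hg : 0 ≤ ∑ j, v j * max (a j * s + b / |u|) 0
      · calc |u| * ∑ j, v j * max (a j * s + b / |u|) 0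
            ≤ 1 * ∑ j, v j * max (a j * s + b / |u|) 0 :=
              mul_le_mul_of_nonneg_right hu hg
          _ = ∑ j, v j * max (a j * s + b / |u|) 0 := one_mul _
          _ ≤ M := hgM
      · have := mul_nonpos_of_nonneg_of_nonpos (abs_nonneg u) (not_le.1 hg).le
        linarith
  -- Conclusion
  refine ⟨p.1, p.2, hps, ?_⟩
  have hMA : M ∈ A := ⟨p.1, -(p.1 * a p.2), by rcases hps with h | h <;> simp [h], rfl⟩
  have hAne : A.Nonempty := ⟨M, hMA⟩
  exact (le_antisymm (csSup_le hAne hub) (le_csSup hbdd hMA)).symm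
end

section
/- (Strong duality for finite-width networks.) Let A ∈ ℝ^{n×d} and y ∈ ℝⁿ, and suppose there exist m ∈ ℕ, U = [u_1 … u_m] ∈ ℝ^{d×m} with ‖u_j‖₂ ≤ 1 for all j, and w ∈ ℝ^m such that (AU)_+ w = y. Then the infimum, over all widths m and all such feasible (U, w), of ‖w‖₁ equals the supremum of vᵀy over all v ∈ ℝⁿ satisfying |vᵀ(Au)_+| ≤ 1 for all u ∈ B₂; moreover, this infimum is attained by a bias-free network with at most n + 1 neurons. -/
open Finset
open Pointwise

/-- Output `(AU)_+ w = ∑_j w_j (A u_j)_+` of a bias-free two-layer ReLU network. -/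
noncomputable def bfOut {n d m : ℕ} (A : Matrix (Fin n) (Fin d) ℝ)
    (U : Fin m → Fin d → ℝ) (w : Fin m → ℝ) : Fin n → ℝ :=
  ∑ j, w j • fun i => max (A.mulVec (U j) i) 0

noncomputable def reluA {n d : ℕ} (A : Matrix (Fin n) (Fin d) ℝ) (u : Fin d → ℝ) : Fin n → ℝ :=
  fun i => max (A.mulVec u i) 0

lemma continuous_reluA {n d : ℕ} (A : Matrix (Fin n) (Fin d) ℝ) : Continuous (reluA A) := by
  refine continuous_pi fun i => Continuous.max ?_ continuous_const
  simp only [Matrix.mulVec, dotProduct]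
  exact continuous_finset_sum _ fun j _ => continuous_const.mul (continuous_apply j)

lemma continuous_l2norm {d : ℕ} : Continuous (l2norm (k := d)) :=
  Real.continuous_sqrt.comp (continuous_finset_sum _ fun i _ => (continuous_apply i).pow 2)

lemma ball_isCompact {d : ℕ} : IsCompact {u : Fin d → ℝ | l2norm u ≤ 1} := by
  apply Metric.isCompact_of_isClosed_isBounded
  · exact isClosed_Iic.preimage continuous_l2norm
  · rw [isBounded_iff_forall_norm_le]
    refine ⟨1, fun x hx => ?_⟩
    rw [pi_norm_le_iff_of_nonneg zero_le_one]
    intro i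
    rw [Real.norm_eq_abs, ← Real.sqrt_sq_eq_abs]
    refine le_trans (Real.sqrt_le_sqrt ?_) hx
    exact Finset.single_le_sum (fun j _ => sq_nonneg (x j)) (Finset.mem_univ i)

lemma sum_embed {M : Type*} [AddCommMonoid M] {ι : Type*} [Fintype ι] {N : ℕ} (e : ι ↪ Fin N)
    (g : ι → M) :
    (∑ k : Fin N, if h : ∃ i, e i = k then g h.choose else 0) = ∑ i, g i := by
  classical
  have h1 : ∀ k ∈ Finset.univ, k ∉ Finset.univ.map e →
      (if h : ∃ i, e i = k then g h.choose else 0) = 0 := by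
    intro k _ hk
    rw [dif_neg]
    rintro ⟨i, rfl⟩
    exact hk (Finset.mem_map_of_mem e (Finset.mem_univ i))
  rw [← Finset.sum_subset (Finset.subset_univ _) h1, Finset.sum_map]
  refine Finset.sum_congr rfl fun i _ => ?_
  have h : ∃ i', e i' = e i := ⟨i, rfl⟩
  rw [dif_pos h]
  congr 1
  exact e.injective h.choose_spec

/-- the symmetrized set of dictionary atoms -/
noncomputable def SS {n d : ℕ} (A : Matrix (Fin n) (Fin d) ℝ) : Set (Fin n → ℝ) :=
  (reluA A '' {u | l2norm u ≤ 1}) ∪ (-(reluA A '' {u | l2norm u ≤ 1}))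

lemma l2norm_zero_s8 {d : ℕ} : l2norm (fun _ : Fin d => (0:ℝ)) = 0 := by
  simp [l2norm]

lemma reluA_zero {n d : ℕ} (A : Matrix (Fin n) (Fin d) ℝ) : reluA A 0 = 0 := by
  funext i
  simp [reluA, Matrix.mulVec_zero]

lemma zero_mem_SS {n d : ℕ} (A : Matrix (Fin n) (Fin d) ℝ) : 0 ∈ SS A :=
  Or.inl ⟨0, by show l2norm _ ≤ 1; rw [show (0 : Fin d → ℝ) = fun _ => 0 from rfl, l2norm_zero_s8]; norm_num, reluA_zero A⟩

/-- general finite convex combinations with ℓ1 weight 1 land in the hull -/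
lemma sum_mem_hull {n d m : ℕ} (A : Matrix (Fin n) (Fin d) ℝ) (U : Fin m → Fin d → ℝ)
    (w : Fin m → ℝ) (hU : ∀ j, l2norm (U j) ≤ 1) (hw : ∑ j, |w j| = 1) :
    ∑ j, w j • reluA A (U j) ∈ convexHull ℝ (SS A) := by
  classical
  have key : ∑ j, w j • reluA A (U j)
      = ∑ j, |w j| • (if 0 ≤ w j then reluA A (U j) else -(reluA A (U j))) := by
    refine Finset.sum_congr rfl fun j _ => ?_
    by_cases h : 0 ≤ w j
    · rw [if_pos h, abs_of_nonneg h]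
    · rw [if_neg h, abs_of_neg (lt_of_not_ge h), smul_neg, neg_smul, neg_neg]
  rw [key]
  refine Convex.sum_mem (convex_convexHull ℝ _) (fun j _ => abs_nonneg _) hw fun j _ => ?_
  apply subset_convexHull
  by_cases h : 0 ≤ w j
  · rw [if_pos h]; exact Or.inl ⟨U j, hU j, rfl⟩
  · rw [if_neg h]
    exact Or.inr (by simpa using ⟨U j, hU j, rfl⟩)

lemma mem_hull_rep {n d : ℕ} (A : Matrix (Fin n) (Fin d) ℝ) {c : Fin n → ℝ}
    (hc : c ∈ convexHull ℝ (SS A)) :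
    ∃ (U : Fin (n+1) → Fin d → ℝ) (w : Fin (n+1) → ℝ),
      (∀ j, l2norm (U j) ≤ 1) ∧ (∑ j, |w j|) = 1 ∧ ∑ j, w j • reluA A (U j) = c := by
  classical
  obtain ⟨ι, hfin, z, wt, hrange, hindep, hpos, hsum, hrep⟩ :=
    eq_pos_convex_span_of_mem_convexHull hc
  have hcard : Fintype.card ι ≤ n + 1 := by
    have h1 := hindep.card_le_finrank_succ
    have h2 : Module.finrank ℝ (vectorSpan ℝ (Set.range z)) ≤ n := by
      have h3 := Submodule.finrank_le (vectorSpan ℝ (Set.range z))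
      rwa [Module.finrank_fin_fun] at h3
    omega
  obtain ⟨e⟩ : Nonempty (ι ↪ Fin (n+1)) :=
    Function.Embedding.nonempty_of_card_le (by simpa using hcard)
  have hdecomp : ∀ i, ∃ (u : Fin d → ℝ) (ε : ℝ),
      l2norm u ≤ 1 ∧ |ε| = 1 ∧ z i = ε • reluA A u := by
    intro i
    rcases hrange (Set.mem_range_self i) with ⟨u, hu, hzu⟩ | hneg
    · exact ⟨u, 1, hu, abs_one, by rw [one_smul, hzu]⟩
    · rcases Set.mem_neg.1 hneg with ⟨u, hu, hzu⟩
      refine ⟨u, -1, hu, by norm_num, ?_⟩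
      rw [neg_one_smul, hzu, neg_neg]
  choose u ε hu hε hz using hdecomp
  refine ⟨fun k => if h : ∃ i, e i = k then u h.choose else 0,
    fun k => if h : ∃ i, e i = k then wt h.choose * ε h.choose else 0, ?_, ?_, ?_⟩
  · intro k
    simp only []
    by_cases h : ∃ i, e i = k
    · rw [dif_pos h]; exact hu _
    · rw [dif_neg h, show (0 : Fin d → ℝ) = fun _ => 0 from rfl, l2norm_zero_s8]; norm_num
  · have hpt : ∀ k : Fin (n+1), |if h : ∃ i, e i = k then wt h.choose * ε h.choose else 0|
        = if h : ∃ i, e i = k then |wt h.choose * ε h.choose| else 0 := by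
      intro k; by_cases h : ∃ i, e i = k <;> simp [h]
    rw [Finset.sum_congr rfl fun k _ => hpt k, sum_embed e fun i => |wt i * ε i|]
    rw [← hsum]
    refine Finset.sum_congr rfl fun i _ => ?_
    rw [abs_mul, hε, mul_one, abs_of_pos (hpos i)]
  · have hpt : ∀ k : Fin (n+1),
        (if h : ∃ i, e i = k then wt h.choose * ε h.choose else 0) •
          reluA A (if h : ∃ i, e i = k then u h.choose else 0)
        = if h : ∃ i, e i = k then (wt h.choose * ε h.choose) • reluA A (u h.choose) else 0 := by
      intro k; by_cases h : ∃ i, e i = k <;> simp [h]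
    rw [Finset.sum_congr rfl fun k _ => hpt k,
      sum_embed e fun i => (wt i * ε i) • reluA A (u i), ← hrep]
    refine Finset.sum_congr rfl fun i _ => ?_
    rw [mul_smul, ← hz]

lemma hull_isCompact {n d : ℕ} (A : Matrix (Fin n) (Fin d) ℝ) :
    IsCompact (convexHull ℝ (SS A)) := by
  have heq : convexHull ℝ (SS A) =
      (fun p : (Fin (n+1) → ℝ) × (Fin (n+1) → Fin d → ℝ) => ∑ j, p.1 j • reluA A (p.2 j)) ''
        ({w | ∑ j, |w j| = 1} ×ˢ Set.univ.pi fun _ => {u | l2norm u ≤ 1}) := by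
    ext c
    constructor
    · intro hc
      obtain ⟨U, w, hU, hw, hrep⟩ := mem_hull_rep A hc
      exact ⟨(w, U), ⟨hw, fun j _ => hU j⟩, hrep⟩
    · rintro ⟨⟨w, U⟩, ⟨hw, hU⟩, rfl⟩
      exact sum_mem_hull A U w (fun j => hU j (Set.mem_univ j)) hw
  rw [heq]
  refine IsCompact.image (IsCompact.prod ?_ (isCompact_univ_pi fun _ => ball_isCompact)) ?_
  · apply Metric.isCompact_of_isClosed_isBounded
    · have hco : Continuous fun w : Fin (n+1) → ℝ => ∑ j, |w j| :=
        continuous_finset_sum _ fun j _ => (continuous_apply j).abs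
      exact isClosed_eq hco continuous_const
    · rw [isBounded_iff_forall_norm_le]
      refine ⟨1, fun w hw => ?_⟩
      rw [pi_norm_le_iff_of_nonneg zero_le_one]
      intro j
      rw [Real.norm_eq_abs]
      calc |w j| ≤ ∑ j', |w j'| :=
            Finset.single_le_sum (f := fun j' => |w j'|) (fun j' _ => abs_nonneg _)
              (Finset.mem_univ j)
        _ = 1 := hw
  · exact continuous_finset_sum _ fun j _ =>
      ((continuous_apply j).comp continuous_fst).smul
        ((continuous_reluA A).comp ((continuous_apply j).comp continuous_snd))

/-- Strong duality for finite-width networks: if the interpolation problem is feasible, the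
minimum ℓ1-norm of output weights equals the optimal dual value `sup {vᵀy : |vᵀ(Au)_+| ≤ 1
∀ u ∈ B₂}`, and the minimum is attained by a network with at most `n + 1` neurons. -/
theorem stmt8 {n d : ℕ} (A : Matrix (Fin n) (Fin d) ℝ) (y : Fin n → ℝ)
    (hfeas : ∃ (m : ℕ) (U : Fin m → Fin d → ℝ) (w : Fin m → ℝ),
        (∀ j, l2norm (U j) ≤ 1) ∧ bfOut A U w = y) :
    sInf {r : ℝ | ∃ (m : ℕ) (U : Fin m → Fin d → ℝ) (w : Fin m → ℝ),
        (∀ j, l2norm (U j) ≤ 1) ∧ bfOut A U w = y ∧ r = ∑ j, |w j|} =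
      sSup {r : ℝ | ∃ v : Fin n → ℝ,
        (∀ u : Fin d → ℝ, l2norm u ≤ 1 → |∑ i, v i * max (A.mulVec u i) 0| ≤ 1) ∧
        r = ∑ i, v i * y i} ∧
    ∃ (m : ℕ), m ≤ n + 1 ∧ ∃ (U : Fin m → Fin d → ℝ) (w : Fin m → ℝ),
      (∀ j, l2norm (U j) ≤ 1) ∧ bfOut A U w = y ∧
      (∑ j, |w j|) =
        sInf {r : ℝ | ∃ (m' : ℕ) (U' : Fin m' → Fin d → ℝ) (w' : Fin m' → ℝ),
          (∀ j, l2norm (U' j) ≤ 1) ∧ bfOut A U' w' = y ∧ r = ∑ j, |w' j|} := by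
  classical
  set CC := convexHull ℝ (SS A) with hCCdef
  set P : Set ℝ := {r : ℝ | ∃ (m : ℕ) (U : Fin m → Fin d → ℝ) (w : Fin m → ℝ),
      (∀ j, l2norm (U j) ≤ 1) ∧ bfOut A U w = y ∧ r = ∑ j, |w j|} with hPdef
  set D : Set ℝ := {r : ℝ | ∃ v : Fin n → ℝ,
      (∀ u : Fin d → ℝ, l2norm u ≤ 1 → |∑ i, v i * max (A.mulVec u i) 0| ≤ 1) ∧
      r = ∑ i, v i * y i} with hDdef
  have hbf : ∀ (m : ℕ) (U : Fin m → Fin d → ℝ) (w : Fin m → ℝ),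
      bfOut A U w = ∑ j, w j • reluA A (U j) := fun _ _ _ => rfl
  have h0CC : (0 : Fin n → ℝ) ∈ CC := subset_convexHull ℝ _ (zero_mem_SS A)
  have hPne : P.Nonempty := by
    obtain ⟨m, U, w, hU, hy⟩ := hfeas
    exact ⟨∑ j, |w j|, m, U, w, hU, hy, rfl⟩
  have hPlb : ∀ r ∈ P, (0:ℝ) ≤ r := by
    rintro r ⟨m, U, w, -, -, rfl⟩
    exact Finset.sum_nonneg fun j _ => abs_nonneg _
  have hbdd : BddBelow P := ⟨0, hPlb⟩
  set t₀ := sInf P with ht₀def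
  have ht₀0 : 0 ≤ t₀ := le_csInf hPne hPlb
  -- every primal value r puts y in r • CC
  have hPC : ∀ r ∈ P, y ∈ r • CC := by
    rintro r ⟨m, U, w, hU, hy, rfl⟩
    by_cases hr : ∑ j, |w j| = 0
    · have hw0 : ∀ j, w j = 0 := fun j =>
        abs_eq_zero.1 ((Finset.sum_eq_zero_iff_of_nonneg fun j _ => abs_nonneg (w j)).1 hr j
          (Finset.mem_univ j))
      have hy0 : y = 0 := by
        rw [← hy, hbf]
        exact Finset.sum_eq_zero fun j _ => by rw [hw0 j, zero_smul]
      rw [hy0, hr, Set.zero_smul_set ⟨0, h0CC⟩]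
      exact Set.zero_mem_zero
    · have hrpos : 0 < ∑ j, |w j| :=
        lt_of_le_of_ne (Finset.sum_nonneg fun j _ => abs_nonneg _) (Ne.symm hr)
      have hmem : (∑ j, |w j|)⁻¹ • y ∈ CC := by
        have hrw : (∑ j, |w j|)⁻¹ • y = ∑ j, ((∑ j', |w j'|)⁻¹ * w j) • reluA A (U j) := by
          rw [← hy, hbf, Finset.smul_sum]
          exact Finset.sum_congr rfl fun j _ => by rw [smul_smul]
        rw [hrw]
        apply sum_mem_hull A U _ hU
        have habs : ∀ j, |(∑ j', |w j'|)⁻¹ * w j| = (∑ j', |w j'|)⁻¹ * |w j| := fun j => by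
          rw [abs_mul, abs_of_pos (inv_pos.2 hrpos)]
        rw [Finset.sum_congr rfl fun j _ => habs j, ← Finset.mul_sum,
          inv_mul_cancel₀ (ne_of_gt hrpos)]
      have h2 := Set.smul_mem_smul_set (a := ∑ j, |w j|) hmem
      rwa [smul_inv_smul₀ (ne_of_gt hrpos)] at h2
  -- membership of t • CC gives an (n+1)-neuron representation of cost t
  have hrep : ∀ t : ℝ, 0 < t → y ∈ t • CC →
      ∃ (U : Fin (n+1) → Fin d → ℝ) (w : Fin (n+1) → ℝ),
        (∀ j, l2norm (U j) ≤ 1) ∧ bfOut A U w = y ∧ (∑ j, |w j|) = t := by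
    intro t ht hmem
    obtain ⟨c, hcCC, hcy⟩ := hmem
    obtain ⟨U, w, hU, hw, hrepc⟩ := mem_hull_rep A hcCC
    refine ⟨U, fun j => t * w j, hU, ?_, ?_⟩
    · rw [hbf, ← hcy, ← hrepc]
      show ∑ j, (t * w j) • reluA A (U j) = t • ∑ j, w j • reluA A (U j)
      rw [Finset.smul_sum]
      exact Finset.sum_congr rfl fun j _ => (smul_smul t (w j) _).symm
    · calc (∑ j, |t * w j|) = ∑ j, t * |w j| := by
            refine Finset.sum_congr rfl fun j _ => ?_
            rw [abs_mul, abs_of_pos ht]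
        _ = t := by rw [← Finset.mul_sum, hw, mul_one]
  -- y lies in t₀ • CC (compactness/minimization argument)
  have hmemt₀ : y ∈ t₀ • CC := by
    have hKcomp : IsCompact ((Set.Icc t₀ (t₀+1) ×ˢ CC) ∩
        {p : ℝ × (Fin n → ℝ) | p.1 • p.2 = y}) :=
      ((isCompact_Icc).prod (hull_isCompact A)).inter_right
        (isClosed_eq (continuous_fst.smul continuous_snd) continuous_const)
    have hKne : ((Set.Icc t₀ (t₀+1) ×ˢ CC) ∩
        {p : ℝ × (Fin n → ℝ) | p.1 • p.2 = y}).Nonempty := by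
      obtain ⟨r, hrP, hrlt⟩ := exists_lt_of_csInf_lt hPne (lt_add_one t₀)
      obtain ⟨c, hcCC, hcy⟩ := hPC r hrP
      exact ⟨(r, c), ⟨⟨csInf_le hbdd hrP, hrlt.le⟩, hcCC⟩, hcy⟩
    obtain ⟨⟨tm, cm⟩, hmemK, hmin⟩ :=
      hKcomp.exists_isMinOn hKne continuous_fst.continuousOn
    have htm : tm = t₀ := by
      refine le_antisymm ?_ hmemK.1.1.1
      by_contra hlt
      push_neg at hlt
      obtain ⟨r, hrP, hrlt⟩ := exists_lt_of_csInf_lt hPne (lt_min hlt (lt_add_one t₀))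
      obtain ⟨c, hcCC, hcy⟩ := hPC r hrP
      have hrK : (r, c) ∈ (Set.Icc t₀ (t₀+1) ×ˢ CC) ∩
          {p : ℝ × (Fin n → ℝ) | p.1 • p.2 = y} :=
        ⟨⟨⟨csInf_le hbdd hrP, (lt_min_iff.1 hrlt).2.le⟩, hcCC⟩, hcy⟩
      exact absurd (isMinOn_iff.1 hmin _ hrK) (not_le.2 (lt_min_iff.1 hrlt).1)
    refine ⟨cm, hmemK.1.2, ?_⟩
    have h2 := hmemK.2
    rw [htm] at h2
    exact h2
  -- attainment of the infimum with n+1 neurons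
  have hAtt : ∃ (U : Fin (n+1) → Fin d → ℝ) (w : Fin (n+1) → ℝ),
      (∀ j, l2norm (U j) ≤ 1) ∧ bfOut A U w = y ∧ (∑ j, |w j|) = t₀ := by
    rcases lt_or_eq_of_le ht₀0 with ht | ht
    · exact hrep t₀ ht hmemt₀
    · obtain ⟨c, hcCC, hcy⟩ := hmemt₀
      have hcy' : t₀ • c = y := hcy
      have hy0 : y = 0 := by rw [← hcy', ← ht, zero_smul]
      refine ⟨fun _ => 0, fun _ => 0, fun j => ?_, ?_, ?_⟩
      · show Real.sqrt _ ≤ 1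
        simp [l2norm]
      · rw [hy0, hbf]
        exact Finset.sum_eq_zero fun j _ => zero_smul _ _
      · rw [← ht]
        exact Finset.sum_eq_zero fun j _ => abs_zero
  -- dual upper bound
  have hDub : ∀ r ∈ D, r ≤ t₀ := by
    rintro r ⟨v, hv, rfl⟩
    obtain ⟨U, w, hU, hyU, hsum⟩ := hAtt
    have happ : ∀ i, (∑ j, w j • reluA A (U j)) i = ∑ j, w j * reluA A (U j) i := by
      intro i
      rw [Finset.sum_apply]
      rfl
    have hswap : ∑ i, v i * y i = ∑ j, w j * ∑ i, v i * reluA A (U j) i := by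
      rw [← hyU, hbf]
      calc ∑ i, v i * (∑ j, w j • reluA A (U j)) i
          = ∑ i, ∑ j, w j * (v i * reluA A (U j) i) := by
            refine Finset.sum_congr rfl fun i _ => ?_
            rw [happ i, Finset.mul_sum]
            exact Finset.sum_congr rfl fun j _ => by ring
        _ = ∑ j, ∑ i, w j * (v i * reluA A (U j) i) := Finset.sum_comm
        _ = ∑ j, w j * ∑ i, v i * reluA A (U j) i := by
            exact Finset.sum_congr rfl fun j _ => (Finset.mul_sum _ _ _).symm
    calc ∑ i, v i * y i = ∑ j, w j * ∑ i, v i * reluA A (U j) i := hswap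
      _ ≤ ∑ j, |w j| := by
          refine Finset.sum_le_sum fun j _ => ?_
          calc w j * ∑ i, v i * reluA A (U j) i
              ≤ |w j * ∑ i, v i * reluA A (U j) i| := le_abs_self _
            _ = |w j| * |∑ i, v i * reluA A (U j) i| := abs_mul _ _
            _ ≤ |w j| * 1 := mul_le_mul_of_nonneg_left (hv (U j) (hU j)) (abs_nonneg _)
            _ = |w j| := mul_one _
      _ = t₀ := hsum
  have hD0 : (0:ℝ) ∈ D := ⟨fun _ => 0, fun u _ => by simp, by simp⟩
  have hDne : D.Nonempty := ⟨0, hD0⟩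
  have hbddD : BddAbove D := ⟨t₀, fun r hr => hDub r hr⟩
  have hsupLe : sSup D ≤ t₀ := csSup_le hDne hDub
  -- dual lower bound: t₀ ≤ sSup D
  have hleSup : t₀ ≤ sSup D := by
    refine le_of_forall_sub_le fun ε hε => ?_
    rcases le_or_gt t₀ 0 with ht | ht
    · have := le_csSup hbddD hD0
      linarith
    · set t : ℝ := max (t₀ - ε) (t₀ / 2) with htdef
      have ht1 : 0 < t := lt_of_lt_of_le (half_pos ht) (le_max_right _ _)
      have ht2 : t < t₀ := max_lt (by linarith) (by linarith)
      have hynot : y ∉ t • CC := by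
        intro hmem
        obtain ⟨U, w, hU, hyU, hsum⟩ := hrep t ht1 hmem
        have htP : t ∈ P := ⟨n+1, U, w, hU, hyU, hsum.symm⟩
        exact absurd (csInf_le hbdd htP) (not_le.2 ht2)
      have htCCconv : Convex ℝ (t • CC) := (convex_convexHull ℝ _).smul t
      have htCCclosed : IsClosed (t • CC) := by
        rw [show t • CC = (fun x => t • x) '' CC from rfl]
        exact ((hull_isCompact A).image (continuous_const_smul t)).isClosed
      obtain ⟨f, u₀, hfu, hfy⟩ := geometric_hahn_banach_closed_point htCCconv htCCclosed hynot
      have hu₀ : 0 < u₀ := by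
        have h0mem : (0 : Fin n → ℝ) ∈ t • CC := ⟨0, h0CC, smul_zero t⟩
        have := hfu 0 h0mem
        rwa [map_zero] at this
      have hfrep : ∀ x : Fin n → ℝ, f x = ∑ i, x i * f (fun j => if i = j then 1 else 0) := by
        intro x
        conv_lhs => rw [pi_eq_sum_univ x]
        rw [map_sum]
        exact Finset.sum_congr rfl fun i _ => by rw [map_smul, smul_eq_mul]
      have hkey : ∀ (c : ℝ) (x : Fin n → ℝ),
          ∑ i, (c * f (fun j => if i = j then 1 else 0)) * x i = c * f x := by
        intro c x
        rw [hfrep x, Finset.mul_sum]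
        exact Finset.sum_congr rfl fun i _ => by ring
      obtain ⟨cmax, hcmaxCC, hcmax⟩ :=
        (hull_isCompact A).exists_isMaxOn ⟨0, h0CC⟩ f.continuous.continuousOn
      have hh0 : 0 ≤ f cmax := by
        have := isMaxOn_iff.1 hcmax 0 h0CC
        rwa [map_zero] at this
      have hth : t * f cmax < u₀ := by
        have := hfu (t • cmax) (Set.smul_mem_smul_set hcmaxCC)
        rwa [map_smul, smul_eq_mul] at this
      have hfSS : ∀ u' : Fin d → ℝ, l2norm u' ≤ 1 → |f (reluA A u')| ≤ f cmax := by
        intro u' hu'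
        have h1 : f (reluA A u') ≤ f cmax :=
          isMaxOn_iff.1 hcmax _ (subset_convexHull ℝ _ (Or.inl ⟨u', hu', rfl⟩))
        have h2 : f (-(reluA A u')) ≤ f cmax :=
          isMaxOn_iff.1 hcmax _ (subset_convexHull ℝ _
            (Or.inr (Set.mem_neg.2 (by rw [neg_neg]; exact ⟨u', hu', rfl⟩))))
        rw [map_neg] at h2
        exact abs_le.2 ⟨by linarith, h1⟩
      have hfypos : 0 < f y := lt_trans hu₀ hfy
      have hhpos : 0 < f cmax := by
        rcases lt_or_eq_of_le hh0 with h | h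
        · exact h
        · exfalso
          have hzero : ∀ u' : Fin d → ℝ, l2norm u' ≤ 1 → f (reluA A u') = 0 := by
            intro u' hu'
            have := hfSS u' hu'
            rw [← h] at this
            exact abs_eq_zero.1 (le_antisymm this (abs_nonneg _))
          have hmemD : t₀ + 1 ∈ D := by
            refine ⟨fun i => ((t₀+1) / f y) * f (fun j => if i = j then 1 else 0),
              fun u' hu' => ?_, ?_⟩
            · rw [show (∑ i, ((t₀+1) / f y) * f (fun j => if i = j then 1 else 0) *
                  max (A.mulVec u' i) 0) = ((t₀+1) / f y) * f (reluA A u') from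
                  hkey _ (reluA A u'), hzero u' hu', mul_zero, abs_zero]
              exact zero_le_one
            · rw [hkey ((t₀+1) / f y) y, div_mul_cancel₀ _ (ne_of_gt hfypos)]
          have := hDub _ hmemD
          linarith
      have hvD : (f cmax)⁻¹ * f y ∈ D := by
        refine ⟨fun i => (f cmax)⁻¹ * f (fun j => if i = j then 1 else 0),
          fun u' hu' => ?_, (hkey (f cmax)⁻¹ y).symm⟩
        rw [show (∑ i, (f cmax)⁻¹ * f (fun j => if i = j then 1 else 0) *
            max (A.mulVec u' i) 0) = (f cmax)⁻¹ * f (reluA A u') from hkey _ (reluA A u'),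
          abs_mul, abs_of_pos (inv_pos.2 hhpos)]
        calc (f cmax)⁻¹ * |f (reluA A u')| ≤ (f cmax)⁻¹ * f cmax :=
              mul_le_mul_of_nonneg_left (hfSS u' hu') (inv_pos.2 hhpos).le
          _ = 1 := inv_mul_cancel₀ (ne_of_gt hhpos)
      have htlt : t < (f cmax)⁻¹ * f y := by
        rw [← div_eq_inv_mul, lt_div_iff₀ hhpos]
        exact lt_trans hth hfy
      have := le_csSup hbddD hvD
      have h3 : t₀ - ε ≤ t := le_max_left _ _
      linarith
  obtain ⟨U, w, hU, hyU, hsum⟩ := hAtt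
  exact ⟨le_antisymm hleSup hsupLe, n+1, le_refl _, U, w, hU, hyU, hsum⟩
end

section
/- Let A ∈ ℝ^{n×d} with n ≤ d have full row rank, set A† := Aᵀ(AAᵀ)⁻¹, and let y ∈ ℝⁿ contain at least one strictly positive and at least one strictly negative entry. Define u₁ = A†(y)_+/‖A†(y)_+‖₂, w₁ = ‖A†(y)_+‖₂, u₂ = A†(−y)_+/‖A†(−y)_+‖₂ and w₂ = −‖A†(−y)_+‖₂. Then (i) the two-neuron bias-free network with these parameters satisfies w₁(Au₁)_+ + w₂(Au₂)_+ = y, and u₁, u₂ have unit Euclidean norm; and (ii) every finite-width bias-free network with unit-norm hidden neurons (‖u_j‖₂ = 1 for all j) and (AU)_+ w = y has at least two nonzero output weights. Hence this network attains the minimum of ‖w‖₀ over all such feasible networks, and the minimum value is 2. -/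
open Finset Matrix

lemma l2norm_nonneg {k : ℕ} (x : Fin k → ℝ) : 0 ≤ l2norm x := Real.sqrt_nonneg _

lemma l2norm_eq_zero {k : ℕ} {x : Fin k → ℝ} (h : l2norm x = 0) : x = 0 := by
  have hs : (∑ i, x i ^ 2) = 0 := by
    have h1 := Real.sqrt_eq_zero'.mp h
    exact le_antisymm h1 (Finset.sum_nonneg fun i _ => sq_nonneg _)
  funext i
  have := (Finset.sum_eq_zero_iff_of_nonneg (fun i _ => sq_nonneg (x i))).mp hs i (by simp)
  exact pow_eq_zero_iff (two_ne_zero) |>.mp this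

lemma l2norm_pos {k : ℕ} {x : Fin k → ℝ} (h : x ≠ 0) : 0 < l2norm x :=
  lt_of_le_of_ne (l2norm_nonneg x) (fun h' => h (l2norm_eq_zero h'.symm))

lemma l2norm_smul {k : ℕ} (c : ℝ) (x : Fin k → ℝ) : l2norm (c • x) = |c| * l2norm x := by
  unfold l2norm
  simp only [Pi.smul_apply, smul_eq_mul, mul_pow]
  rw [← Finset.mul_sum, Real.sqrt_mul (sq_nonneg c), Real.sqrt_sq_eq_abs]

/-- Closed-form minimal-cardinality solution: for full row rank `A` (with `A† = Aᵀ(AAᵀ)⁻¹`)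
and `y` with both positive and negative entries, the two-neuron network
`u₁ = A†(y)₊/‖A†(y)₊‖₂, w₁ = ‖A†(y)₊‖₂`, `u₂ = A†(-y)₊/‖A†(-y)₊‖₂, w₂ = -‖A†(-y)₊‖₂`
fits `y` with unit-norm neurons and nonzero weights, and any unit-norm-neuron network
fitting `y` has at least two nonzero output weights; hence the minimum of `‖w‖₀` is `2`,
attained by this network. -/
theorem stmt12 {n d : ℕ} (hnd : n ≤ d) (A : Matrix (Fin n) (Fin d) ℝ)
    (hrank : A.rank = n) (y : Fin n → ℝ)
    (hpos : ∃ i, 0 < y i) (hneg : ∃ i, y i < 0) :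
    let dag := Aᵀ * (A * Aᵀ)⁻¹
    let u1 := (l2norm (dag.mulVec (reluV y)))⁻¹ • dag.mulVec (reluV y)
    let w1 := l2norm (dag.mulVec (reluV y))
    let u2 := (l2norm (dag.mulVec (reluV (-y))))⁻¹ • dag.mulVec (reluV (-y))
    let w2 := -l2norm (dag.mulVec (reluV (-y)))
    (w1 • reluV (A.mulVec u1) + w2 • reluV (A.mulVec u2) = y) ∧
    l2norm u1 = 1 ∧ l2norm u2 = 1 ∧ w1 ≠ 0 ∧ w2 ≠ 0 ∧
    (∀ (m : ℕ) (U : Fin m → Fin d → ℝ) (w : Fin m → ℝ),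
      (∀ j, l2norm (U j) = 1) → bfOut A U w = y →
      2 ≤ (Finset.univ.filter fun j => w j ≠ 0).card) := by
  intro dag u1 w1 u2 w2
  obtain ⟨ip, hip⟩ := hpos
  obtain ⟨im, him⟩ := hneg
  -- A * Aᵀ is invertible
  have hrk : (A * Aᵀ).rank = n := by rw [Matrix.rank_self_mul_transpose, hrank]
  have hsurj : Function.Surjective (A * Aᵀ).mulVec := by
    have htop : LinearMap.range (A * Aᵀ).mulVecLin = ⊤ := by
      apply Submodule.eq_top_of_finrank_eq
      rw [← Matrix.rank, hrk]; simp
    intro v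
    obtain ⟨u, hu⟩ := LinearMap.range_eq_top.mp htop v
    exact ⟨u, hu⟩
  have hunit : IsUnit (A * Aᵀ) := Matrix.mulVec_surjective_iff_isUnit.mp hsurj
  have hunitdet : IsUnit (A * Aᵀ).det := (Matrix.isUnit_iff_isUnit_det _).mp hunit
  have hAdag : A * dag = 1 := by
    show A * (Aᵀ * (A * Aᵀ)⁻¹) = 1
    rw [← Matrix.mul_assoc, Matrix.mul_nonsing_inv _ hunitdet]
  have hAv : ∀ v : Fin n → ℝ, A.mulVec (dag.mulVec v) = v := by
    intro v
    rw [Matrix.mulVec_mulVec, hAdag, Matrix.one_mulVec]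
  -- nonvanishing of relu parts
  have hry : reluV y ≠ 0 := by
    intro h
    have := congrFun h ip
    simp only [reluV, Pi.zero_apply] at this
    rw [max_eq_left hip.le] at this
    exact hip.ne' this
  have hry' : reluV (-y) ≠ 0 := by
    intro h
    have := congrFun h im
    simp only [reluV, Pi.neg_apply, Pi.zero_apply] at this
    rw [max_eq_left (by linarith)] at this
    linarith
  have hv1 : dag.mulVec (reluV y) ≠ 0 := by
    intro h; exact hry (by rw [← hAv (reluV y), h, Matrix.mulVec_zero])
  have hv2 : dag.mulVec (reluV (-y)) ≠ 0 := by
    intro h; exact hry' (by rw [← hAv (reluV (-y)), h, Matrix.mulVec_zero])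
  have hc1 : 0 < w1 := l2norm_pos hv1
  have hc2 : 0 < l2norm (dag.mulVec (reluV (-y))) := l2norm_pos hv2
  -- key computation for a term
  have key : ∀ v : Fin n → ℝ,
      (l2norm (dag.mulVec (reluV v))) •
        reluV (A.mulVec ((l2norm (dag.mulVec (reluV v)))⁻¹ • dag.mulVec (reluV v)))
        = if dag.mulVec (reluV v) = 0 then 0 else reluV v := by
    intro v
    by_cases h : dag.mulVec (reluV v) = 0
    · rw [if_pos h, h]
      have hl : l2norm (0 : Fin d → ℝ) = 0 := by simp [l2norm]
      rw [hl, zero_smul]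
    · have hc : 0 < l2norm (dag.mulVec (reluV v)) := l2norm_pos h
      rw [if_neg h]
      funext i
      simp only [Pi.smul_apply, reluV, Matrix.mulVec_smul, hAv, smul_eq_mul]
      rw [max_eq_left (mul_nonneg (inv_nonneg.mpr hc.le) (le_max_right _ _))]
      rw [← mul_assoc, mul_inv_cancel₀ hc.ne', one_mul]
  refine ⟨?_, ?_, ?_, hc1.ne', neg_ne_zero.mpr hc2.ne', ?_⟩
  · -- fit
    have k1 := key y
    have k2 := key (-y)
    rw [if_neg hv1] at k1
    rw [if_neg hv2] at k2
    show w1 • reluV (A.mulVec u1) + w2 • reluV (A.mulVec u2) = y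
    have : w2 • reluV (A.mulVec u2) = -((l2norm (dag.mulVec (reluV (-y)))) • reluV (A.mulVec u2)) := by
      simp [w2, neg_smul]
    rw [this, k1, k2]
    funext i
    simp only [Pi.add_apply, Pi.neg_apply, reluV, Pi.neg_apply]
    rw [← sub_eq_add_neg]
    exact max_zero_sub_max_neg_zero_eq_self (y i)
  · show l2norm u1 = 1
    rw [l2norm_smul, abs_of_pos (inv_pos.mpr hc1), inv_mul_cancel₀ hc1.ne']
  · show l2norm u2 = 1
    rw [l2norm_smul, abs_of_pos (inv_pos.mpr hc2), inv_mul_cancel₀ hc2.ne']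
  · -- lower bound
    intro m U w hU hfit
    by_contra hlt
    push_neg at hlt
    interval_cases hS : (Finset.univ.filter fun j => w j ≠ 0).card
    · -- card = 0 : all weights zero
      have hall : ∀ j, w j = 0 := by
        intro j
        by_contra hj
        have : j ∈ Finset.univ.filter fun j => w j ≠ 0 := by simp [hj]
        rw [Finset.card_eq_zero.mp hS] at this
        exact absurd this (Finset.notMem_empty j)
      have : y = 0 := by
        rw [← hfit]; unfold bfOut; funext i; simp [hall]
      rw [this] at hip; simp at hip
    · -- card = 1 : single neuron
      obtain ⟨j0, hj0⟩ := Finset.card_eq_one.mp hS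
      have hsum : ∀ i, y i = w j0 * max (A.mulVec (U j0) i) 0 := by
        intro i
        rw [← hfit]
        unfold bfOut
        rw [← Finset.sum_subset (Finset.subset_univ (Finset.univ.filter fun j => w j ≠ 0))
          (fun j _ hj => by
            simp only [Finset.mem_filter, Finset.mem_univ, true_and, not_not] at hj
            simp [hj])]
        rw [hj0, Finset.sum_singleton]
        simp
      have h1 := hsum ip
      have h2 := hsum im
      rcases lt_trichotomy (w j0) 0 with h | h | h
      · nlinarith [le_max_right (A.mulVec (U j0) ip) 0, hip]
      · rw [h, zero_mul] at h1; linarith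
      · nlinarith [le_max_right (A.mulVec (U j0) im) 0, him]
end

section
/- Fix δ > 0. For each n ≥ 2, let d(n) be an integer with d(n) ≥ (2 + δ) n log n, and let A ∈ ℝ^{n×d(n)} be a random matrix with independent standard Gaussian entries and rows a_1ᵀ, …, a_nᵀ. Then the probability that every row of A is an extreme point of the convex hull of the rows, i.e. P[ a_i ∉ conv{a_j : j ≠ i} for all i ∈ {1,…,n} ], tends to 1 as n → ∞. -/
/-!
Once `n ≥ 2`, the hypothesis gives `d(n) ≥ n`, and then the probability is exactly `1`. Indeed,
`m ≤ d + 1` i.i.d. points drawn from a law on `ℝ^d` that charges no proper affine subspace are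
almost surely affinely independent: adding the points one at a time, each new point misses the
affine span of the previous ones, a proper subspace. An affinely independent point never lies in
the convex hull of the others, as that hull sits inside their affine span.
-/

open Finset MeasureTheory ProbabilityTheory Filter

noncomputable def gaussMeasure (n d : ℕ) : Measure (Fin n × Fin d → ℝ) :=
  Measure.pi fun _ => gaussianReal 0 1

open Module

theorem AffineIndependent.fin_snoc {k V P : Type*} [DivisionRing k] [AddCommGroup V] [Module k V]
    [AddTorsor V P] {m : ℕ} {p : Fin m → P} (hp : AffineIndependent k p) {x : P}
    (hx : x ∉ affineSpan k (Set.range p)) :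
    AffineIndependent k (Fin.snoc p x : Fin (m + 1) → P) := by
  have hcompl : {y : Fin (m + 1) | y ≠ Fin.last m} = Set.range Fin.castSucc := by
    ext y
    exact Fin.exists_castSucc_eq.symm
  refine AffineIndependent.affineIndependent_of_notMem_span (i := Fin.last m) ?_ ?_
  · rw [← affineIndependent_equiv (finSuccAboveEquiv (Fin.last m))]
    convert hp using 1
    funext j
    simp [finSuccAboveEquiv_apply]
  · rw [hcompl, ← Set.range_comp]
    simpa using hx

theorem AffineIndependent.notMem_convexHull_image_compl {𝕜 E ι : Type*} [Field 𝕜]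
    [LinearOrder 𝕜] [IsStrictOrderedRing 𝕜] [AddCommGroup E] [Module 𝕜 E] {p : ι → E}
    (hp : AffineIndependent 𝕜 p) (i : ι) : p i ∉ convexHull 𝕜 (p '' {i}ᶜ) := fun h => by
  rw [Set.compl_eq_univ_sdiff] at h
  exact hp.notMem_affineSpan_sdiff i Set.univ (convexHull_subset_affineSpan _ h)

theorem MeasureTheory.Measure.AbsolutelyContinuous.pi_fin :
    ∀ {d : ℕ} {X : Fin d → Type*} [∀ i, MeasurableSpace (X i)]
      {μ ν : ∀ i, Measure (X i)} [∀ i, SigmaFinite (μ i)] [∀ i, SigmaFinite (ν i)],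
      (∀ i, μ i ≪ ν i) → Measure.pi μ ≪ Measure.pi ν
  | 0, _, _, μ, ν, _, _, _ => by rw [Measure.pi_of_empty μ, Measure.pi_of_empty ν]
  | _ + 1, _, _, μ, ν, _, _, h => by
    rw [← (measurePreserving_piFinSuccAbove μ 0).symm.map_eq,
      ← (measurePreserving_piFinSuccAbove ν 0).symm.map_eq]
    exact ((h 0).prod (pi_fin fun i => h _)).map (MeasurableEquiv.measurable _)

section AffineIndependentSample

variable {E : Type*} [NormedAddCommGroup E] [NormedSpace ℝ E] [FiniteDimensional ℝ E]
  [MeasurableSpace E] [BorelSpace E]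

theorem ae_affineIndependent_pi (μ : Measure E) [SigmaFinite μ]
    (hμ : ∀ s : AffineSubspace ℝ E, s ≠ ⊤ → μ s = 0) :
    ∀ {m : ℕ}, m ≤ finrank ℝ E + 1 →
      ∀ᵐ p ∂(Measure.pi fun _ : Fin m => μ), AffineIndependent ℝ p
  | 0, _ => .of_forall fun _ => affineIndependent_of_subsingleton ℝ _
  | m + 1, hm => by
    let e := MeasurableEquiv.piFinSuccAbove (fun _ : Fin (m + 1) => E) (Fin.last m)
    have hmeas : MeasurableSet {z : E × (Fin m → E) | AffineIndependent ℝ (e.symm z)} :=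
      e.symm.measurable isOpen_setOfPred_affineIndependent.measurableSet
    rw [← (measurePreserving_piFinSuccAbove (fun _ => μ) (Fin.last m)).symm.map_eq,
      e.symm.measurableEmbedding.ae_map_iff, Measure.ae_prod_iff_ae_ae hmeas,
      Measure.ae_ae_comm hmeas]
    filter_upwards [ae_affineIndependent_pi μ hμ (m := m) (by omega)] with p hp
    have hspan : affineSpan ℝ (Set.range p) ≠ ⊤ := by
      rw [Ne, hp.affineSpan_eq_top_iff_card_eq_finrank_add_one, Fintype.card_fin]
      omega
    filter_upwards [measure_eq_zero_iff_ae_notMem.1 (hμ _ hspan)] with x hx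
    simpa [e, MeasurableEquiv.piFinSuccAbove_symm_apply, Fin.insertNth_last', Fin.snocEquiv]
      using hp.fin_snoc hx

end AffineIndependentSample

instance (n d : ℕ) : IsProbabilityMeasure (gaussMeasure n d) := by
  unfold gaussMeasure; infer_instance

theorem gaussMeasure_map_curry (n d : ℕ) :
    (gaussMeasure n d).map (MeasurableEquiv.curry (Fin n) (Fin d) ℝ) =
      Measure.pi fun _ : Fin n => Measure.pi fun _ : Fin d => gaussianReal 0 1 := by
  simpa only [gaussMeasure, Measure.infinitePi_eq_pi] using
    Measure.infinitePi_map_curry fun (_ : Fin n) (_ : Fin d) => gaussianReal 0 1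

theorem ae_affineIndependent_rows_gaussMeasure {n d : ℕ} (h : n ≤ d + 1) :
    ∀ᵐ ω ∂gaussMeasure n d, AffineIndependent ℝ fun i j => ω (i, j) := by
  have hrow : Measure.pi (fun _ : Fin d => gaussianReal 0 1) ≪ volume := by
    rw [volume_pi]
    exact .pi_fin fun _ => gaussianReal_absolutelyContinuous 0 one_ne_zero
  have hcurry : MeasurePreserving (MeasurableEquiv.curry (Fin n) (Fin d) ℝ) (gaussMeasure n d)
      (Measure.pi fun _ => Measure.pi fun _ => gaussianReal 0 1) :=
    ⟨MeasurableEquiv.measurable _, gaussMeasure_map_curry n d⟩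
  refine hcurry.quasiMeasurePreserving.ae (ae_affineIndependent_pi _ (fun s hs => ?_) ?_)
  · exact hrow (Measure.addHaar_affineSubspace _ s hs)
  · simpa using h

theorem gaussMeasure_rows_notMem_convexHull {n d : ℕ} (h : n ≤ d + 1) :
    gaussMeasure n d
      {ω | ∀ i : Fin n, (fun j => ω (i, j)) ∉
        convexHull ℝ {x | ∃ k : Fin n, k ≠ i ∧ x = fun j => ω (k, j)}} = 1 := by
  rw [← measure_univ (μ := gaussMeasure n d)]
  refine measure_congr (ae_eq_univ.2 ?_)
  filter_upwards [ae_affineIndependent_rows_gaussMeasure h] with ω hω i hi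
  refine hω.notMem_convexHull_image_compl i (convexHull_mono ?_ hi)
  rintro _ ⟨k, hk, rfl⟩
  exact ⟨k, hk, rfl⟩

theorem natCast_le_two_mul_mul_log {n : ℕ} (hn : 2 ≤ n) : (n : ℝ) ≤ 2 * n * Real.log n := by
  have hlog2 : 1 / 2 ≤ Real.log 2 := Real.log_two_gt_d9.le.trans' (by norm_num)
  have hlog : Real.log 2 ≤ Real.log n := Real.log_le_log two_pos (by exact_mod_cast hn)
  nlinarith

/-- For i.i.d. standard Gaussian data with ambient dimension `d(n) ≥ (2 + δ) n log n`,
the probability that every row is an extreme point of the convex hull of the rows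
(i.e. lies outside the convex hull of the other rows) tends to one as `n → ∞`. -/
theorem stmt16 (δ : ℝ) (hδ : 0 < δ) (d : ℕ → ℕ)
    (hd : ∀ n : ℕ, 2 ≤ n → (2 + δ) * n * Real.log n ≤ d n) :
    Tendsto (fun n : ℕ => gaussMeasure n (d n)
        {ω | ∀ i : Fin n, (fun j => ω (i, j)) ∉
          convexHull ℝ {x : Fin (d n) → ℝ | ∃ k : Fin n, k ≠ i ∧ x = fun j => ω (k, j)}})
      atTop (nhds 1) := by
  refine tendsto_const_nhds.congr' ?_
  filter_upwards [eventually_ge_atTop 2] with n hn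
  have hlog : 0 ≤ (n : ℝ) * Real.log n := by positivity
  have hnd : n ≤ d n := by
    exact_mod_cast show (n : ℝ) ≤ d n by nlinarith [natCast_le_two_mul_mul_log hn, hd n hn]
  exact (gaussMeasure_rows_notMem_convexHull (Nat.le_succ_of_le hnd)).symm
end

section
/- Let A ∈ ℝ^{n×d} with n ≤ d satisfy AAᵀ = I_n, let y ∈ {−1, +1}ⁿ with n₊ := #{i : y_i = +1} ≥ 1 and n₋ := #{i : y_i = −1} ≥ 1, and let β > 0. Consider the hinge-loss objective H(U, w) = Σ_{i=1}^n max{0, 1 − y_i ((AU)_+ w)_i} + β‖w‖₁ over all widths m and parameters with ‖u_j‖₂ ≤ 1 for every j. Then an optimal solution is given by the (at most two-neuron) network with u₁ = Aᵀ(y)_+/√n₊ and w₁ = √n₊ if β < √n₊, w₁ any value in [0, √n₊] if β = √n₊, and (u₁, w₁) = (0, 0) if β > √n₊; together with u₂ = Aᵀ(−y)_+/√n₋ and w₂ = −√n₋ if β < √n₋, w₂ = −w₋ for any w₋ ∈ [0, √n₋] if β = √n₋, and (u₂, w₂) = (0, 0) if β > √n₋; each of these choices attains the infimum of H. -/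
open Finset Matrix

/-- The hinge-loss objective `∑ᵢ max(0, 1 - yᵢ((AU)₊w)ᵢ) + β‖w‖₁`. -/
noncomputable def hingeObj {n d m : ℕ} (A : Matrix (Fin n) (Fin d) ℝ) (y : Fin n → ℝ)
    (β : ℝ) (U : Fin m → Fin d → ℝ) (w : Fin m → ℝ) : ℝ :=
  (∑ i, max 0 (1 - y i * bfOut A U w i)) + β * ∑ j, |w j|

/-!
Weak duality: for `θ ∈ [0,1]ⁿ` we have `max(0, t) ≥ θ t`, hence
`H(U, w) ≥ ∑ θᵢ - ∑ⱼ wⱼ ⟨θ ∘ y, (A uⱼ)₊⟩ ≥ ∑ θᵢ` as soon as `|⟨θ ∘ y, (A u)₊⟩| ≤ β` for every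
`‖u‖ ≤ 1`. Take `θ = min(1, β/√n₊)` on the positive class and `min(1, β/√n₋)` on the negative one:
the correlation is then a difference of two nonnegative class sums, each at most `β` by
Cauchy–Schwarz and `‖(A u)₊‖ ≤ ‖A u‖ ≤ ‖u‖`. The resulting bound
`√n₊ min(√n₊, β) + √n₋ min(√n₋, β)` is attained by the threshold network, because `A Aᵀ = 1`
makes `(A Aᵀ (±y)₊)₊ = (±y)₊`.
-/

lemma sum_sq_eq_dotProduct {k : ℕ} (x : Fin k → ℝ) : ∑ i, x i ^ 2 = x ⬝ᵥ x := by
  simp only [dotProduct, sq]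

section Whitened

variable {n d : ℕ} {A : Matrix (Fin n) (Fin d) ℝ}

lemma dotProduct_transpose_mulVec_self (hA : A * Aᵀ = 1) (x : Fin n → ℝ) :
    Aᵀ *ᵥ x ⬝ᵥ Aᵀ *ᵥ x = x ⬝ᵥ x := by
  rw [dotProduct_mulVec, vecMul_transpose, mulVec_mulVec, hA, one_mulVec]

lemma dotProduct_mulVec_self_le (hA : A * Aᵀ = 1) (u : Fin d → ℝ) :
    A *ᵥ u ⬝ᵥ A *ᵥ u ≤ u ⬝ᵥ u := by
  set v := A *ᵥ u
  have hcross : u ⬝ᵥ Aᵀ *ᵥ v = v ⬝ᵥ v := by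
    rw [dotProduct_mulVec, vecMul_transpose]
  have hsq : 0 ≤ (u - Aᵀ *ᵥ v) ⬝ᵥ (u - Aᵀ *ᵥ v) := by
    simpa using dotProduct_self_star_nonneg (u - Aᵀ *ᵥ v)
  have hexpand : (u - Aᵀ *ᵥ v) ⬝ᵥ (u - Aᵀ *ᵥ v) = u ⬝ᵥ u - v ⬝ᵥ v := by
    rw [sub_dotProduct, dotProduct_sub, dotProduct_sub, hcross, dotProduct_comm (Aᵀ *ᵥ v) u,
      hcross, dotProduct_transpose_mulVec_self hA]
    ring
  linarith

end Whitened

lemma sum_sq_relu_le {k : ℕ} (x : Fin k → ℝ) : ∑ i, max (x i) 0 ^ 2 ≤ ∑ i, x i ^ 2 :=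
  Finset.sum_le_sum fun i _ => by
    rcases le_total (x i) 0 with h | h
    · simpa [max_eq_right h] using sq_nonneg (x i)
    · rw [max_eq_left h]

lemma sum_le_sqrt_card_of_sum_sq_le_one {ι : Type*} (s : Finset ι) (f : ι → ℝ)
    (hf : ∑ i ∈ s, f i ^ 2 ≤ 1) : ∑ i ∈ s, f i ≤ √(#s : ℝ) :=
  (le_abs_self _).trans <| Real.abs_le_sqrt <|
    sq_sum_le_card_mul_sum_sq.trans (mul_le_of_le_one_right (Nat.cast_nonneg _) hf)

lemma mul_le_max_zero {θ t : ℝ} (hθ : θ ∈ Set.Icc (0 : ℝ) 1) : θ * t ≤ max 0 t := by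
  rcases le_total t 0 with h | h
  · exact (mul_nonpos_of_nonneg_of_nonpos hθ.1 h).trans (le_max_left _ _)
  · exact (mul_le_of_le_one_left h hθ.2).trans (le_max_right _ _)

lemma sum_mul_bfOut {n d m : ℕ} (A : Matrix (Fin n) (Fin d) ℝ) (U : Fin m → Fin d → ℝ)
    (w : Fin m → ℝ) (v : Fin n → ℝ) :
    ∑ i, v i * bfOut A U w i = ∑ j, w j * ∑ i, v i * max ((A *ᵥ U j) i) 0 := by
  simp only [bfOut, Finset.sum_apply, Pi.smul_apply, smul_eq_mul, Finset.mul_sum]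
  rw [Finset.sum_comm]
  simp only [mul_left_comm]

lemma sum_le_hingeObj {n d m : ℕ} {A : Matrix (Fin n) (Fin d) ℝ} {y : Fin n → ℝ} {β : ℝ}
    {U : Fin m → Fin d → ℝ} (w : Fin m → ℝ) {θ : Fin n → ℝ} (hθ : ∀ i, θ i ∈ Set.Icc (0 : ℝ) 1)
    (hdual : ∀ j, |∑ i, θ i * y i * max ((A *ᵥ U j) i) 0| ≤ β) :
    ∑ i, θ i ≤ hingeObj A y β U w := by
  have hloss : ∀ i, θ i * (1 - y i * bfOut A U w i) ≤ max 0 (1 - y i * bfOut A U w i) :=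
    fun i => mul_le_max_zero (hθ i)
  have hcross : ∑ i, θ i * y i * bfOut A U w i ≤ β * ∑ j, |w j| := by
    rw [sum_mul_bfOut, Finset.mul_sum]
    refine Finset.sum_le_sum fun j _ => ?_
    calc _ ≤ |w j * ∑ i, θ i * y i * max ((A *ᵥ U j) i) 0| := le_abs_self _
      _ ≤ |w j| * β := by rw [abs_mul]; exact mul_le_mul_of_nonneg_left (hdual j) (abs_nonneg _)
      _ = β * |w j| := mul_comm _ _
  calc ∑ i, θ i = ∑ i, θ i * (1 - y i * bfOut A U w i) + ∑ i, θ i * y i * bfOut A U w i := by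
        rw [← Finset.sum_add_distrib]; congr 1; ext i; ring
    _ ≤ hingeObj A y β U w := add_le_add (Finset.sum_le_sum fun i _ => hloss i) hcross

lemma sum_sq_relu_mulVec_le_one {n d : ℕ} {A : Matrix (Fin n) (Fin d) ℝ} (hA : A * Aᵀ = 1)
    {u : Fin d → ℝ} (hu : l2norm u ≤ 1) (s : Finset (Fin n)) :
    ∑ i ∈ s, max ((A *ᵥ u) i) 0 ^ 2 ≤ 1 :=
  calc ∑ i ∈ s, max ((A *ᵥ u) i) 0 ^ 2
      ≤ ∑ i, max ((A *ᵥ u) i) 0 ^ 2 :=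
        Finset.sum_le_sum_of_subset_of_nonneg (Finset.subset_univ s) fun _ _ _ => sq_nonneg _
    _ ≤ ∑ i, (A *ᵥ u) i ^ 2 := sum_sq_relu_le _
    _ ≤ ∑ k, u k ^ 2 := by
        simpa only [sum_sq_eq_dotProduct] using dotProduct_mulVec_self_le hA u
    _ ≤ 1 := Real.sqrt_le_one.mp hu

noncomputable def dualWeight (β s : ℝ) : ℝ := min 1 (β / s)

lemma dualWeight_mem_Icc {β s : ℝ} (hβ : 0 ≤ β) (hs : 0 ≤ s) :
    dualWeight β s ∈ Set.Icc (0 : ℝ) 1 :=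
  ⟨le_min zero_le_one (div_nonneg hβ hs), min_le_left _ _⟩

lemma dualWeight_mul_self {β s : ℝ} (hβ : 0 ≤ β) (hs : 0 ≤ s) :
    dualWeight β s * s = min s β := by
  rcases hs.eq_or_lt with rfl | hs
  · simp [hβ]
  · rw [dualWeight, min_mul_of_nonneg _ _ hs.le, one_mul, div_mul_cancel₀ _ hs.ne']

lemma dualWeight_mul_sum_le {ι : Type*} {β : ℝ} (hβ : 0 ≤ β) (s : Finset ι) {g : ι → ℝ}
    (hg : ∑ i ∈ s, g i ^ 2 ≤ 1) : dualWeight β √(#s : ℝ) * ∑ i ∈ s, g i ≤ β :=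
  calc dualWeight β √(#s : ℝ) * ∑ i ∈ s, g i
      ≤ dualWeight β √(#s : ℝ) * √(#s : ℝ) :=
        mul_le_mul_of_nonneg_left (sum_le_sqrt_card_of_sum_sq_le_one s g hg)
          (dualWeight_mem_Icc hβ (Real.sqrt_nonneg _)).1
    _ = min √(#s : ℝ) β := dualWeight_mul_self hβ (Real.sqrt_nonneg _)
    _ ≤ β := min_le_right _ _

lemma sum_const_dualWeight {ι : Type*} {β : ℝ} (hβ : 0 ≤ β) (s : Finset ι) :
    ∑ _i ∈ s, dualWeight β √(#s : ℝ) = √(#s : ℝ) * min √(#s : ℝ) β := by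
  rw [Finset.sum_const, nsmul_eq_mul]
  calc (#s : ℝ) * dualWeight β √(#s : ℝ)
      = √(#s : ℝ) * √(#s : ℝ) * dualWeight β √(#s : ℝ) := by
        rw [Real.mul_self_sqrt (Nat.cast_nonneg _)]
    _ = √(#s : ℝ) * min √(#s : ℝ) β := by
        rw [← dualWeight_mul_self hβ (Real.sqrt_nonneg _)]; ring

def IsThresholdWeight (s β w : ℝ) : Prop :=
  (β < s → w = s) ∧ (β = s → 0 ≤ w ∧ w ≤ s) ∧ (s < β → w = 0)

lemma IsThresholdWeight.sq_mul_hinge_add {s β w : ℝ} (hs : 0 ≤ s) (h : IsThresholdWeight s β w) :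
    s ^ 2 * max 0 (1 - w * s⁻¹) + β * |w| = s * min s β := by
  obtain ⟨hlt, heq, hgt⟩ := h
  rcases hs.eq_or_lt with rfl | hs0
  · have hw : w = 0 := by
      rcases lt_trichotomy β 0 with hβ | hβ | hβ
      exacts [hlt hβ, le_antisymm (heq hβ).2 (heq hβ).1, hgt hβ]
    simp [hw]
  rcases lt_trichotomy β s with hβs | rfl | hsβ
  · rw [hlt hβs, mul_inv_cancel₀ hs0.ne', sub_self, max_self, abs_of_pos hs0,
      min_eq_right hβs.le]
    ring
  · obtain ⟨hw0, hws⟩ := heq rfl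
    rw [← div_eq_mul_inv, max_eq_right (sub_nonneg.mpr ((div_le_one hs0).mpr hws)),
      abs_of_nonneg hw0, min_self]
    field_simp
    ring
  · rw [hgt hsβ, min_eq_left hsβ.le]
    simp [sq]

section Candidate

variable {n d : ℕ} {A : Matrix (Fin n) (Fin d) ℝ}

noncomputable def thresholdNeuron (A : Matrix (Fin n) (Fin d) ℝ) (β s : ℝ) (x : Fin n → ℝ) :
    Fin d → ℝ :=
  if s < β then 0 else s⁻¹ • Aᵀ *ᵥ reluV x

lemma l2norm_thresholdNeuron_le_one (hA : A * Aᵀ = 1) {β s : ℝ} {x : Fin n → ℝ}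
    (hx : ∑ i, reluV x i ^ 2 = s ^ 2) : l2norm (thresholdNeuron A β s x) ≤ 1 := by
  unfold thresholdNeuron
  split_ifs
  · simp [l2norm]
  · rw [l2norm, Real.sqrt_le_one, sum_sq_eq_dotProduct, smul_dotProduct, dotProduct_smul,
      dotProduct_transpose_mulVec_self hA, ← sum_sq_eq_dotProduct, hx, smul_eq_mul,
      smul_eq_mul]
    rcases eq_or_ne s 0 with rfl | hs
    · simp
    · exact le_of_eq (by field_simp)

lemma mul_relu_mulVec_thresholdNeuron (hA : A * Aᵀ = 1) {β s w : ℝ} (hs : 0 ≤ s)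
    (hw : s < β → w = 0) (x : Fin n → ℝ) (i : Fin n) :
    w * max ((A *ᵥ thresholdNeuron A β s x) i) 0 = w * s⁻¹ * reluV x i := by
  unfold thresholdNeuron
  split_ifs with hsβ
  · simp [hw hsβ]
  · have hx : 0 ≤ reluV x i := le_max_right _ _
    rw [mulVec_smul, mulVec_mulVec, hA, one_mulVec, Pi.smul_apply, smul_eq_mul,
      max_eq_left (mul_nonneg (inv_nonneg.mpr hs) hx), mul_assoc]

lemma bfOut_thresholdNeurons (hA : A * Aᵀ = 1) {β s t w₁ w₂ : ℝ} (hs : 0 ≤ s) (ht : 0 ≤ t)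
    (hw₁ : s < β → w₁ = 0) (hw₂ : t < β → w₂ = 0) (x z : Fin n → ℝ) (i : Fin n) :
    bfOut A ![thresholdNeuron A β s x, thresholdNeuron A β t z] ![w₁, w₂] i =
      w₁ * s⁻¹ * reluV x i + w₂ * t⁻¹ * reluV z i := by
  simp only [bfOut, Fin.sum_univ_two, Finset.sum_apply, Pi.smul_apply, smul_eq_mul,
    Matrix.cons_val_zero, Matrix.cons_val_one]
  rw [mul_relu_mulVec_thresholdNeuron hA hs hw₁, mul_relu_mulVec_thresholdNeuron hA ht hw₂]

end Candidate

section Labels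

variable {n : ℕ} {y : Fin n → ℝ}

lemma sum_eq_sum_pos_add_sum_neg (hy : ∀ i, y i = 1 ∨ y i = -1) (f : Fin n → ℝ) :
    ∑ i, f i = ∑ i with y i = 1, f i + ∑ i with y i = -1, f i := by
  rw [← Finset.sum_filter_add_sum_filter_not _ (fun i => y i = 1)]
  congr 2
  ext i
  simp only [Finset.mem_filter, Finset.mem_univ, true_and]
  exact ⟨(hy i).resolve_left, fun h => by norm_num [h]⟩

noncomputable def labelDual (y : Fin n → ℝ) (β : ℝ) (i : Fin n) : ℝ :=
  if y i = 1 then dualWeight β √(#{j | y j = 1} : ℝ) else dualWeight β √(#{j | y j = -1} : ℝ)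

lemma labelDual_mem_Icc {β : ℝ} (hβ : 0 ≤ β) (i : Fin n) : labelDual y β i ∈ Set.Icc (0 : ℝ) 1 := by
  unfold labelDual
  split_ifs <;> exact dualWeight_mem_Icc hβ (Real.sqrt_nonneg _)

lemma labelDual_of_mem_pos {β : ℝ} {i : Fin n} (hi : i ∈ ({j | y j = 1} : Finset (Fin n))) :
    labelDual y β i = dualWeight β √(#{j | y j = 1} : ℝ) :=
  if_pos (Finset.mem_filter.mp hi).2

lemma labelDual_of_mem_neg {β : ℝ} {i : Fin n} (hi : i ∈ ({j | y j = -1} : Finset (Fin n))) :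
    labelDual y β i = dualWeight β √(#{j | y j = -1} : ℝ) :=
  if_neg (by rw [(Finset.mem_filter.mp hi).2]; norm_num)

lemma sum_labelDual (hy : ∀ i, y i = 1 ∨ y i = -1) {β : ℝ} (hβ : 0 ≤ β) :
    ∑ i, labelDual y β i =
      √(#{i | y i = 1} : ℝ) * min √(#{i | y i = 1} : ℝ) β +
        √(#{i | y i = -1} : ℝ) * min √(#{i | y i = -1} : ℝ) β := by
  rw [sum_eq_sum_pos_add_sum_neg hy, Finset.sum_congr rfl fun _ => labelDual_of_mem_pos,
    Finset.sum_congr rfl fun _ => labelDual_of_mem_neg, sum_const_dualWeight hβ,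
    sum_const_dualWeight hβ]

lemma abs_sum_labelDual_mul_le (hy : ∀ i, y i = 1 ∨ y i = -1) {β : ℝ} (hβ : 0 ≤ β)
    {g : Fin n → ℝ} (hg0 : ∀ i, 0 ≤ g i) (hg : ∀ s, ∑ i ∈ s, g i ^ 2 ≤ 1) :
    |∑ i, labelDual y β i * y i * g i| ≤ β := by
  set P : Finset (Fin n) := {i | y i = 1}
  set N : Finset (Fin n) := {i | y i = -1}
  have hsplit : ∑ i, labelDual y β i * y i * g i =
      dualWeight β √(#P : ℝ) * ∑ i ∈ P, g i - dualWeight β √(#N : ℝ) * ∑ i ∈ N, g i := by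
    rw [sum_eq_sum_pos_add_sum_neg hy, Finset.mul_sum, Finset.mul_sum, sub_eq_add_neg,
      ← Finset.sum_neg_distrib]
    congr 1 <;> refine Finset.sum_congr rfl fun i hi => ?_
    · rw [labelDual_of_mem_pos hi, (Finset.mem_filter.mp hi).2, mul_one]
    · rw [labelDual_of_mem_neg hi, (Finset.mem_filter.mp hi).2]; ring
  have hterm_nonneg : ∀ s : Finset (Fin n), 0 ≤ dualWeight β √(#s : ℝ) * ∑ i ∈ s, g i :=
    fun s => mul_nonneg (dualWeight_mem_Icc hβ (Real.sqrt_nonneg _)).1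
      (Finset.sum_nonneg fun i _ => hg0 i)
  rw [hsplit]
  exact abs_sub_le_of_nonneg_of_le (hterm_nonneg P) (dualWeight_mul_sum_le hβ P (hg P))
    (hterm_nonneg N) (dualWeight_mul_sum_le hβ N (hg N))

lemma hingeObj_lower_bound {d m : ℕ} {A : Matrix (Fin n) (Fin d) ℝ} (hA : A * Aᵀ = 1)
    (hy : ∀ i, y i = 1 ∨ y i = -1) {β : ℝ} (hβ : 0 ≤ β) {U : Fin m → Fin d → ℝ}
    (hU : ∀ j, l2norm (U j) ≤ 1) (w : Fin m → ℝ) :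
    √(#{i | y i = 1} : ℝ) * min √(#{i | y i = 1} : ℝ) β +
      √(#{i | y i = -1} : ℝ) * min √(#{i | y i = -1} : ℝ) β ≤ hingeObj A y β U w :=
  sum_labelDual hy hβ ▸ sum_le_hingeObj w (labelDual_mem_Icc hβ) fun j =>
    abs_sum_labelDual_mul_le hy hβ (fun _ => le_max_right _ _)
      (sum_sq_relu_mulVec_le_one hA (hU j))

lemma sum_sq_reluV_eq_card (hy : ∀ i, y i = 1 ∨ y i = -1) :
    ∑ i, reluV y i ^ 2 = #{i | y i = 1} := by
  rw [← Finset.sum_boole]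
  refine Finset.sum_congr rfl fun i _ => ?_
  rcases hy i with h | h <;> norm_num [reluV, h]

lemma sum_sq_reluV_neg_eq_card (hy : ∀ i, y i = 1 ∨ y i = -1) :
    ∑ i, reluV (-y) i ^ 2 = #{i | y i = -1} := by
  rw [← Finset.sum_boole]
  refine Finset.sum_congr rfl fun i _ => ?_
  rcases hy i with h | h <;> norm_num [reluV, h]

lemma hingeObj_thresholdNeurons {d : ℕ} {A : Matrix (Fin n) (Fin d) ℝ} (hA : A * Aᵀ = 1)
    (hy : ∀ i, y i = 1 ∨ y i = -1) {β w₁ w₂ : ℝ}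
    (h₁ : IsThresholdWeight √(#{i | y i = 1} : ℝ) β w₁)
    (h₂ : IsThresholdWeight √(#{i | y i = -1} : ℝ) β (-w₂)) :
    hingeObj A y β
        ![thresholdNeuron A β √(#{i | y i = 1} : ℝ) y,
          thresholdNeuron A β √(#{i | y i = -1} : ℝ) (-y)] ![w₁, w₂] =
      √(#{i | y i = 1} : ℝ) * min √(#{i | y i = 1} : ℝ) β +
        √(#{i | y i = -1} : ℝ) * min √(#{i | y i = -1} : ℝ) β := by
  set P : Finset (Fin n) := {i | y i = 1}
  set N : Finset (Fin n) := {i | y i = -1}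
  have hout := bfOut_thresholdNeurons hA (Real.sqrt_nonneg #P) (Real.sqrt_nonneg #N) h₁.2.2
    (fun h => neg_eq_zero.mp (h₂.2.2 h)) y (-y)
  have hloss : ∑ i, max 0 (1 - y i * (w₁ * (√(#P : ℝ))⁻¹ * reluV y i +
        w₂ * (√(#N : ℝ))⁻¹ * reluV (-y) i)) =
      √(#P : ℝ) ^ 2 * max 0 (1 - w₁ * (√(#P : ℝ))⁻¹) +
        √(#N : ℝ) ^ 2 * max 0 (1 - -w₂ * (√(#N : ℝ))⁻¹) := by
    rw [sum_eq_sum_pos_add_sum_neg hy, Real.sq_sqrt (Nat.cast_nonneg _),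
      Real.sq_sqrt (Nat.cast_nonneg _), ← nsmul_eq_mul, ← nsmul_eq_mul, ← Finset.sum_const,
      ← Finset.sum_const]
    congr 1 <;> refine Finset.sum_congr rfl fun i hi => ?_ <;>
      norm_num [reluV, (Finset.mem_filter.mp hi).2]
  simp only [hingeObj, hout]
  rw [hloss, Fin.sum_univ_two, Matrix.cons_val_zero, Matrix.cons_val_one,
    Matrix.cons_val_zero, ← abs_neg w₂, ← h₁.sq_mul_hinge_add (Real.sqrt_nonneg _),
    ← h₂.sq_mul_hinge_add (Real.sqrt_nonneg _)]
  ring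

end Labels

theorem stmt19_general {n d : ℕ} (A : Matrix (Fin n) (Fin d) ℝ)
    (hA : A * Aᵀ = 1) (y : Fin n → ℝ) (hy : ∀ i, y i = 1 ∨ y i = -1)
    (β : ℝ) (hβ : 0 < β) :
    let sp := Real.sqrt ((Finset.univ.filter fun i => y i = 1).card : ℝ)
    let sq := Real.sqrt ((Finset.univ.filter fun i => y i = -1).card : ℝ)
    let u1 : Fin d → ℝ := if sp < β then 0 else sp⁻¹ • Aᵀ.mulVec (reluV y)
    let u2 : Fin d → ℝ := if sq < β then 0 else sq⁻¹ • Aᵀ.mulVec (reluV (-y))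
    ∀ w1 w2 : ℝ,
      ((β < sp → w1 = sp) ∧ (β = sp → 0 ≤ w1 ∧ w1 ≤ sp) ∧ (sp < β → w1 = 0)) →
      ((β < sq → w2 = -sq) ∧ (β = sq → -sq ≤ w2 ∧ w2 ≤ 0) ∧ (sq < β → w2 = 0)) →
      (∀ j, l2norm (![u1, u2] j) ≤ 1) ∧
      hingeObj A y β ![u1, u2] ![w1, w2] =
        sInf {r : ℝ | ∃ (m : ℕ) (U : Fin m → Fin d → ℝ) (w : Fin m → ℝ),
          (∀ j, l2norm (U j) ≤ 1) ∧ r = hingeObj A y β U w} := by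
  intro sp sq u1 u2 w1 w2 hw1 ⟨hw2_lt, hw2_eq, hw2_gt⟩
  have hw2 : IsThresholdWeight sq β (-w2) :=
    ⟨fun h => by rw [hw2_lt h, neg_neg], fun h => by constructor <;> linarith [hw2_eq h],
      fun h => by rw [hw2_gt h, neg_zero]⟩
  have hfeas : ∀ j, l2norm (![u1, u2] j) ≤ 1 := Fin.forall_fin_two.mpr
    ⟨l2norm_thresholdNeuron_le_one hA <| by
        rw [sum_sq_reluV_eq_card hy, Real.sq_sqrt (Nat.cast_nonneg _)],
      l2norm_thresholdNeuron_le_one hA <| by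
        rw [sum_sq_reluV_neg_eq_card hy, Real.sq_sqrt (Nat.cast_nonneg _)]⟩
  have hvalue : hingeObj A y β ![u1, u2] ![w1, w2] = sp * min sp β + sq * min sq β :=
    hingeObj_thresholdNeurons hA hy hw1 hw2
  refine ⟨hfeas, (IsLeast.csInf_eq ?_).symm⟩
  refine ⟨⟨2, ![u1, u2], ![w1, w2], hfeas, rfl⟩, ?_⟩
  rintro r ⟨m, U, w, hU, rfl⟩
  rw [hvalue]
  exact hingeObj_lower_bound hA hy hβ.le hU w

/-- Closed-form optimal solutions of the hinge-loss problem for whitened data and binary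
labels: with `n₊`, `n₋` the class sizes, any output weights `w₁, w₂` obeying the
thresholding rules (`w₁ = √n₊` if `β < √n₊`, `w₁ ∈ [0,√n₊]` if `β = √n₊`, `w₁ = 0` if
`β > √n₊`; symmetrically `w₂`), combined with neurons `Aᵀ(y)₊/√n₊` resp. `Aᵀ(-y)₊/√n₋`
(replaced by `0` when the corresponding threshold is exceeded), attain the infimum of the
hinge objective over all widths and `‖u_j‖₂ ≤ 1`. -/
theorem stmt19 {n d : ℕ} (hnd : n ≤ d) (A : Matrix (Fin n) (Fin d) ℝ)
    (hA : A * Aᵀ = 1) (y : Fin n → ℝ) (hy : ∀ i, y i = 1 ∨ y i = -1)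
    (hp : 1 ≤ (Finset.univ.filter fun i => y i = 1).card)
    (hm : 1 ≤ (Finset.univ.filter fun i => y i = -1).card)
    (β : ℝ) (hβ : 0 < β) :
    let sp := Real.sqrt ((Finset.univ.filter fun i => y i = 1).card : ℝ)
    let sq := Real.sqrt ((Finset.univ.filter fun i => y i = -1).card : ℝ)
    let u1 : Fin d → ℝ := if sp < β then 0 else sp⁻¹ • Aᵀ.mulVec (reluV y)
    let u2 : Fin d → ℝ := if sq < β then 0 else sq⁻¹ • Aᵀ.mulVec (reluV (-y))
    ∀ w1 w2 : ℝ,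
      ((β < sp → w1 = sp) ∧ (β = sp → 0 ≤ w1 ∧ w1 ≤ sp) ∧ (sp < β → w1 = 0)) →
      ((β < sq → w2 = -sq) ∧ (β = sq → -sq ≤ w2 ∧ w2 ≤ 0) ∧ (sq < β → w2 = 0)) →
      (∀ j, l2norm (![u1, u2] j) ≤ 1) ∧
      hingeObj A y β ![u1, u2] ![w1, w2] =
        sInf {r : ℝ | ∃ (m : ℕ) (U : Fin m → Fin d → ℝ) (w : Fin m → ℝ),
          (∀ j, l2norm (U j) ≤ 1) ∧ r = hingeObj A y β U w} :=
  stmt19_general A hA y hy β hβ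
end
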